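/- arXiv:2502.08081 — 9 statements merged into one kernel-verified Lean document; each statement's English description precedes it below -/
import Mathlib

section
/- Let s, p, t be real numbers with e^{−p} − t·s·e^{p} > 0. Set φ = t·e^{p}/(e^{−p} − t·s·e^{p}), s′ = s·e^{p}·(e^{−p} − s·e^{p}·t) and p′ = −log(e^{−p} − s·e^{p}·t). Then u(φ)·(ū(s)·a(p))·u(−t) = ū(s′)·a(p′) as an identity of 2×2 real matrices. -/
/-!
Write `a(p) = diag(l, m)` with `l m = 1` and `D = m - t s l`. Then `ū(s) a(p) u(-t) = [[l, -t l], [s l, D]]`,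
and `φ = t l / D` is exactly the shear that clears its upper right entry. The determinant stays `1`, so
the upper left entry becomes `D⁻¹ = e^{p′}`, while the lower left entry `s l = s′ e^{p′}` gives `s′ = s l D`.
-/

open Matrix

theorem upper_mul_lower_mul_diag_mul_upper_eq {K : Type*} [Field K] {l m s t : K} (hlm : l * m = 1)
    (hD : m - t * s * l ≠ 0) :
    !![1, t * l / (m - t * s * l); 0, 1] * (!![1, 0; s, 1] * !![l, 0; 0, m]) * !![1, -t; 0, 1]
      = !![1, 0; s * l * (m - t * s * l), 1] * !![(m - t * s * l)⁻¹, 0; 0, m - t * s * l] := by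
  generalize hD_def : m - t * s * l = D at hD ⊢
  simp only [mul_fin_two, mul_zero, mul_one, one_mul, zero_mul, add_zero, zero_add, mul_neg,
    EmbeddingLike.apply_eq_iff_eq, vecCons_inj, and_true]
  refine ⟨⟨?upper_left, ?upper_right⟩, ?lower_left, ?lower_right⟩
  case upper_left =>
    field_simp
    linear_combination hlm - l * hD_def
  case upper_right =>
    field_simp
    linear_combination l * t * hD_def
  case lower_left => field_simp
  case lower_right => linear_combination hD_def

/-- Matching function identity for the horocycle flow (Lemma 3.9, 2×2 matrix calculation):
`u(φ) · (ū(s) · a(p)) · u(−t) = ū(s′) · a(p′)` where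
`u(t) = [[1, t], [0, 1]]`, `ū(s) = [[1, 0], [s, 1]]`, `a(p) = [[eᵖ, 0], [0, e⁻ᵖ]]`. -/
theorem matching_matrix_identity (s p t : ℝ)
    (hpos : 0 < Real.exp (-p) - t * s * Real.exp p) :
    let φ : ℝ := t * Real.exp p / (Real.exp (-p) - t * s * Real.exp p)
    let s' : ℝ := s * Real.exp p * (Real.exp (-p) - s * Real.exp p * t)
    let p' : ℝ := - Real.log (Real.exp (-p) - s * Real.exp p * t)
    (!![1, φ; 0, 1] : Matrix (Fin 2) (Fin 2) ℝ) *
        (!![1, 0; s, 1] * !![Real.exp p, 0; 0, Real.exp (-p)]) *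
        !![1, -t; 0, 1]
      = !![1, 0; s', 1] * !![Real.exp p', 0; 0, Real.exp (-p')] := by
  intro φ s' p'
  have hD_comm : Real.exp (-p) - s * Real.exp p * t = Real.exp (-p) - t * s * Real.exp p := by ring
  have hexp_p' : Real.exp p' = (Real.exp (-p) - t * s * Real.exp p)⁻¹ := by
    rw [Real.exp_neg, hD_comm, Real.exp_log hpos]
  have hexp_neg_p' : Real.exp (-p') = Real.exp (-p) - t * s * Real.exp p := by
    rw [neg_neg, hD_comm, Real.exp_log hpos]
  have hs' : s' = s * Real.exp p * (Real.exp (-p) - t * s * Real.exp p) := by rw [← hD_comm]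
  rw [hexp_p', hexp_neg_p', hs']
  have hdet : Real.exp p * Real.exp (-p) = 1 := by rw [← Real.exp_add, add_neg_cancel, Real.exp_zero]
  exact upper_mul_lower_mul_diag_mul_upper_eq hdet hpos.ne'
end

section
/- There exists ε₀ > 0 such that for all real numbers s ≠ 0, p, t with |p| < ε₀ and |t| ≤ ε₀/|s| the following hold, where s_t = s·e^{p}·(e^{−p} − s·e^{p}·t) and p_t = −log(e^{−p} − s·e^{p}·t): (i) e^{−p} − s·e^{p}·t > 0, so p_t is well defined; (ii) |s_t| ≤ 2|s| and |p_t| ≤ 2(|p| + |t|·|s|); (iii) moreover, for every ε ∈ (0, ε₀], if |p| < ε and |t| ≤ ε/|s|, then |φ′(t) − 1| < √ε, where φ(u) = u·e^{p}/(e^{−p} − u·s·e^{p}) and φ′ denotes its derivative. -/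
/-!
Take `ε₀ = 1/100`. Factor `e⁻ᵖ - s eᵖ t = e⁻ᵖ (1 - y)` with `y = s t e²ᵖ`, so `|y| ≤ (3/2)|t s|`
is small. Then `s_t = s (1 - y)` and `p_t = p - log (1 - y)`, which gives (i) and (ii).
The map `φ` is a Möbius transformation of determinant `eᵖ e⁻ᵖ = 1`, so
`φ'(t) = (e⁻ᵖ - s eᵖ t)⁻²`; since `e⁻ᵖ - s eᵖ t` is `4ε`-close to `1`, `|φ'(t) - 1| = O(ε) < √ε`.
-/

open Real

lemma exp_le_one_add_two_mul_abs {q : ℝ} (hq : |q| ≤ 1) : exp q ≤ 1 + 2 * |q| := by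
  linarith [(abs_le.mp (abs_exp_sub_one_le hq)).2]

lemma abs_log_one_sub_le {y : ℝ} (hy : |y| < 1) : |log (1 - y)| ≤ |y| / (1 - |y|) := by
  simpa using abs_log_sub_add_sum_range_le hy 0

lemma hasDerivAt_mul_div_sub_mul (a b d u : ℝ) (h : d - u * b ≠ 0) :
    HasDerivAt (fun v => v * a / (d - v * b)) (a * d / (d - u * b) ^ 2) u := by
  have hnum : HasDerivAt (fun v => v * a) a u := by simpa using (hasDerivAt_id u).mul_const a
  have hden : HasDerivAt (fun v => d - v * b) (-b) u := by
    simpa using ((hasDerivAt_id u).mul_const b).const_sub d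
  exact (hnum.div hden h).congr_deriv (by ring)

lemma abs_inv_sq_sub_one_lt_sqrt {x ε : ℝ} (hε : 0 < ε) (hε₀ : ε ≤ 1 / 100)
    (hx : |x - 1| ≤ 4 * ε) : |(x ^ 2)⁻¹ - 1| < √ε := by
  obtain ⟨r, hr, rfl⟩ : ∃ r, 0 < r ∧ ε = r ^ 2 := ⟨√ε, sqrt_pos.mpr hε, (sq_sqrt hε.le).symm⟩
  rw [sqrt_sq hr.le]
  have hr₀ : r ≤ 1 / 10 := by nlinarith
  obtain ⟨hx₁, hx₂⟩ := abs_le.mp hx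
  have hx₀ : 0 < x := by nlinarith
  rw [show (x ^ 2)⁻¹ - 1 = (1 - x) * (1 + x) / x ^ 2 by field_simp; ring, abs_div, abs_mul,
    abs_sub_comm, abs_of_pos (by linarith : 0 < 1 + x), abs_of_pos (by positivity : 0 < x ^ 2),
    div_lt_iff₀ (by positivity)]
  calc |x - 1| * (1 + x) ≤ 4 * r ^ 2 * (2 + 4 * r ^ 2) :=
        mul_le_mul hx (by linarith) (by linarith) (by positivity)
    _ < r * (1 - 4 * r ^ 2) ^ 2 := by nlinarith
    _ ≤ r * x ^ 2 := by gcongr <;> nlinarith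

lemma abs_neg_log_exp_neg_mul_one_sub_le {p y a : ℝ} (hy : |y| ≤ 3 / 2 * a) (ha : a ≤ 1 / 100) :
    |-log (exp (-p) * (1 - y))| ≤ 2 * (|p| + a) := by
  have hy₁ : |y| < 1 := by linarith
  have hy₀ : 0 < 1 - y := by linarith [le_abs_self y]
  rw [log_mul (exp_pos _).ne' hy₀.ne', log_exp, neg_add, neg_neg]
  calc |p + -log (1 - y)| ≤ |p| + |log (1 - y)| := by simpa using abs_add_le p (-log (1 - y))
    _ ≤ |p| + |y| / (1 - |y|) := by gcongr; exact abs_log_one_sub_le hy₁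
    _ ≤ 2 * (|p| + a) := by
      have : |y| / (1 - |y|) ≤ 2 * a := by
        rw [div_le_iff₀ (by linarith)]
        nlinarith [abs_nonneg y]
      linarith [abs_nonneg p]

lemma exp_neg_sub_mul_exp_mul (s p t : ℝ) :
    exp (-p) - s * exp p * t = exp (-p) * (1 - s * t * exp (2 * p)) := by
  have : exp (-p) * exp (2 * p) = exp p := by rw [← exp_add]; ring_nf
  linear_combination (s * t) * this

section Estimates

variable {s p t ε : ℝ}

lemma abs_mul_exp_two_mul_le (hp : |p| ≤ 1 / 100) :
    |s * t * exp (2 * p)| ≤ 3 / 2 * (|t| * |s|) := by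
  have : exp (2 * p) ≤ 3 / 2 := by
    have := exp_le_one_add_two_mul_abs (q := 2 * p) (by rw [abs_mul]; norm_num; linarith)
    rw [abs_mul] at this; norm_num at this; linarith
  rw [abs_mul, abs_mul, abs_of_pos (exp_pos _)]
  nlinarith [mul_nonneg (abs_nonneg t) (abs_nonneg s)]

lemma abs_exp_neg_sub_mul_exp_sub_one_le (hp : |p| ≤ ε) (hts : |t| * |s| ≤ ε)
    (hε : ε ≤ 1 / 100) : |exp (-p) - s * exp p * t - 1| ≤ 4 * ε := by
  have hexp : exp p ≤ 2 := by linarith [exp_le_one_add_two_mul_abs (q := p) (by linarith)]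
  have h₁ : |exp (-p) - 1| ≤ 2 * ε := by
    linarith [abs_exp_sub_one_le (x := -p) (by rw [abs_neg]; linarith), abs_neg p]
  have h₂ : |s * exp p * t| ≤ 2 * ε := by
    rw [abs_mul, abs_mul, abs_of_pos (exp_pos _)]
    calc |s| * exp p * |t| = exp p * (|t| * |s|) := by ring
      _ ≤ 2 * ε := mul_le_mul hexp hts (by positivity) (by norm_num)
  calc |exp (-p) - s * exp p * t - 1| = |(exp (-p) - 1) - s * exp p * t| := by ring_nf
    _ ≤ |exp (-p) - 1| + |s * exp p * t| := abs_sub _ _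
    _ ≤ 4 * ε := by linarith

lemma hasDerivAt_matching_function (h : exp (-p) - s * exp p * t ≠ 0) :
    HasDerivAt (fun u => u * exp p / (exp (-p) - u * s * exp p))
      ((exp (-p) - s * exp p * t) ^ 2)⁻¹ t := by
  have hmul : exp p * exp (-p) = 1 := by rw [← exp_add, add_neg_cancel, exp_zero]
  convert hasDerivAt_mul_div_sub_mul (exp p) (s * exp p) (exp (-p)) t
    (by convert h using 1; ring) using 1
  · simp only [mul_assoc]
  · rw [hmul]
    ring

end Estimates

/-- Quantitative estimates of the matching function lemma (Lemma 3.9). With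
`s_t = s·eᵖ·(e⁻ᵖ − s·eᵖ·t)`, `p_t = −log(e⁻ᵖ − s·eᵖ·t)` and
`φ(u) = u·eᵖ/(e⁻ᵖ − u·s·eᵖ)`. -/
theorem matching_function_estimates :
    ∃ ε₀ : ℝ, 0 < ε₀ ∧
      ∀ s p t : ℝ, s ≠ 0 → |p| < ε₀ → |t| ≤ ε₀ / |s| →
        (0 < Real.exp (-p) - s * Real.exp p * t) ∧
        (|s * Real.exp p * (Real.exp (-p) - s * Real.exp p * t)| ≤ 2 * |s|) ∧
        (|(- Real.log (Real.exp (-p) - s * Real.exp p * t))| ≤ 2 * (|p| + |t| * |s|)) ∧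
        (∀ ε : ℝ, 0 < ε → ε ≤ ε₀ → |p| < ε → |t| ≤ ε / |s| →
          |deriv (fun u : ℝ => u * Real.exp p / (Real.exp (-p) - u * s * Real.exp p)) t - 1|
            < Real.sqrt ε) := by
  refine ⟨1 / 100, by norm_num, fun s p t hs hp ht => ?_⟩
  have hs' : 0 < |s| := abs_pos.mpr hs
  have hts : |t| * |s| ≤ 1 / 100 := (le_div_iff₀ hs').mp ht
  have hx := exp_neg_sub_mul_exp_mul s p t
  set y := s * t * exp (2 * p)
  have hy : |y| ≤ 3 / 2 * (|t| * |s|) := abs_mul_exp_two_mul_le hp.le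
  have hy₀ : 0 < 1 - y := by linarith [le_abs_self y]
  have hx₀ : 0 < exp (-p) - s * exp p * t := hx ▸ mul_pos (exp_pos _) hy₀
  refine ⟨hx₀, ?_, ?_, fun ε hε hε₀ hpε htε => ?_⟩
  · rw [hx, ← mul_assoc, mul_assoc s, ← exp_add, add_neg_cancel, exp_zero, mul_one, abs_mul]
    have : |1 - y| ≤ 2 := by linarith [abs_sub (1 : ℝ) y, abs_one (α := ℝ)]
    nlinarith [abs_nonneg s]
  · rw [hx]
    exact abs_neg_log_exp_neg_mul_one_sub_le hy hts
  · rw [(hasDerivAt_matching_function hx₀.ne').deriv]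
    exact abs_inv_sq_sub_one_lt_sqrt hε hε₀
      (abs_exp_neg_sub_mul_exp_sub_one_le hpε.le ((le_div_iff₀ hs').mp htε) hε₀)
end

section
/- Let C, w, n_max > 0 and ε ∈ (0, 10⁻³). Then there exists R₂ > 0, depending only on C, w and n_max, with the following property. Let R ≥ R₂ and let I be a closed interval of length R written as a union of finitely many closed subintervals with pairwise disjoint interiors, consisting of intervals J₁, …, J_{n₀} together with intervals J_i^{(p)} for 1 ≤ p ≤ m and 1 ≤ i ≤ n_p, where n_p ≤ n_max for every p; write P_b for the collection of all J_i^{(p)}. Assume: (1) ∑_{J ∈ P_b} ℓ(J) ≥ (1 − ε)·R, where ℓ(J) denotes the length of J; (2) whenever p ≠ q, the distance between J_i^{(p)} and J_j^{(q)} is at least max(R₂, C·min(ℓ(J_i^{(p)}), ℓ(J_j^{(q)}))^{1+w}). Then there exist p₀ ∈ {1, …, m} and i₀ ∈ {1, …, n_{p₀}} such that ℓ(J_{i₀}^{(p₀)}) ≥ R/(32·n_max) and ∑_{i=1}^{n_{p₀}} ℓ(J_i^{(p₀)}) ≥ (3/4)·R. -/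
/-!
Two intervals from different families whose lengths both satisfy `C ℓ ^ (1 + w) > R` would be
more than `R` apart, which is impossible inside `I`; so at most one family `p₀` contains such a
long interval. The remaining families are bounded by a dyadic layer-cake count: at level
`t = σ 2 ^ k` the families owning an interval longer than `t` are pairwise
`C t ^ (1 + w)`-separated inside `I`, hence there are at most `2R / (C t ^ (1 + w))` of them, and
the separation `R₂` allows at most `2R / R₂` families in all. Summing the levels, these families
cover at most `2 n_max R (σ / R₂ + 1 / (C σ ^ w (1 - 2 ^ (-w))))`, which is `≤ R / 5` once `σ` and
then `R₂` are large. Hence `p₀` covers at least `(1 - ε - 1/5) R ≥ 3R/4`, and its longest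
interval is at least `3R / (4 n_max)` long.
-/

open MeasureTheory Set Finset

theorem card_mul_le_of_le_abs_sub {ι : Type*} (S : Finset ι) (x : ι → ℝ) {x₀ R g : ℝ}
    (hR : 0 ≤ R) (hg : 0 < g) (hx : ∀ q ∈ S, x q ∈ Icc x₀ (x₀ + R))
    (hsep : ∀ q ∈ S, ∀ r ∈ S, q ≠ r → g ≤ |x q - x r|) :
    (#S : ℝ) * g ≤ R + g := by
  have hdisj : (S : Set ι).PairwiseDisjoint fun q => Ico (x q) (x q + g) := by
    intro q hq r hr hqr
    rw [Function.onFun, Ico_disjoint_Ico, min_add_add_right, ← sub_nonneg]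
    linarith [max_sub_min_eq_abs' (x q) (x r), hsep q hq r hr hqr]
  have hsub : (⋃ q ∈ S, Ico (x q) (x q + g)) ⊆ Ico x₀ (x₀ + R + g) :=
    iUnion₂_subset fun q hq => Ico_subset_Ico (hx q hq).1 (by linarith [(hx q hq).2])
  have hvol := measure_mono (μ := volume) hsub
  rw [measure_biUnion_finset hdisj fun _ _ => measurableSet_Ico] at hvol
  simp only [Real.volume_Ico, add_sub_cancel_left, sum_const, nsmul_eq_mul,
    show x₀ + R + g - x₀ = R + g by ring] at hvol
  rwa [← ENNReal.ofReal_natCast, ← ENNReal.ofReal_mul (by positivity),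
    ENNReal.ofReal_le_ofReal_iff (by positivity)] at hvol

theorem min_le_dyadic_layers (ℓ σ : ℝ) (K : ℕ) :
    min ℓ (σ * 2 ^ K) ≤
      (if 0 < ℓ then σ else 0) + ∑ k ∈ range K, if σ * 2 ^ k < ℓ then σ * 2 ^ k else 0 := by
  induction K with
  | zero =>
    split_ifs with h
    · simp
    · simp only [range_zero, sum_empty, add_zero]
      exact (min_le_left _ _).trans (not_lt.1 h)
  | succ K ih =>
    rw [sum_range_succ, ← add_assoc]
    by_cases h : σ * 2 ^ K < ℓ
    · rw [if_pos h]
      rw [min_eq_right h.le] at ih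
      linarith [min_le_right ℓ (σ * 2 ^ (K + 1)), show σ * 2 ^ (K + 1) = 2 * (σ * 2 ^ K) by ring]
    · rw [if_neg h, add_zero]
      exact (min_le_left _ _).trans ((le_min le_rfl (not_lt.1 h)).trans ih)

section Families

variable {ι : Type*} {κ : ι → Type*} [∀ q, Fintype (κ q)] (I : ∀ q, κ q → Set ℝ)
  (ℓ : ∀ q, κ q → ℝ) (Q : Finset ι)

theorem card_filter_exists_lt_mul_le {t g x₀ R : ℝ} (hR : 0 ≤ R) (hg : 0 < g)
    (hI : ∀ q ∈ Q, ∀ i, (I q i).Nonempty ∧ I q i ⊆ Icc x₀ (x₀ + R))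
    (hgR : ∀ q ∈ Q, ∀ i, t < ℓ q i → g ≤ R)
    (hsep : ∀ q ∈ Q, ∀ r ∈ Q, q ≠ r → ∀ i j, t < ℓ q i → t < ℓ r j →
      ∀ x ∈ I q i, ∀ y ∈ I r j, g ≤ |x - y|) :
    (#{q ∈ Q | ∃ i, t < ℓ q i} : ℝ) * g ≤ 2 * R := by
  set S := {q ∈ Q | ∃ i, t < ℓ q i}
  rcases S.eq_empty_or_nonempty with hS | ⟨q, hq⟩
  · simp [hS, hR]
  have hpt : ∀ q ∈ S, ∃ y, ∃ i, t < ℓ q i ∧ y ∈ I q i := fun q hq => by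
    obtain ⟨hqQ, i, hi⟩ := mem_filter.1 hq
    exact ⟨_, i, hi, (hI q hqQ i).1.some_mem⟩
  choose! x i hi hxi using hpt
  have hcount := card_mul_le_of_le_abs_sub S x hR hg
    (fun q hq => (hI q (mem_filter.1 hq).1 _).2 (hxi q hq))
    (fun q hq r hr hqr => hsep q (mem_filter.1 hq).1 r (mem_filter.1 hr).1 hqr _ _
      (hi q hq) (hi r hr) _ (hxi q hq) _ (hxi r hr))
  linarith [hgR q (mem_filter.1 hq).1 _ (hi q hq)]

theorem sum_sum_ite_lt_le {nmax : ℝ} (hcard : ∀ q ∈ Q, (Fintype.card (κ q) : ℝ) ≤ nmax)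
    (t : ℝ) {c : ℝ} (hc : 0 ≤ c) :
    ∑ q ∈ Q, ∑ i, (if t < ℓ q i then c else 0) ≤ nmax * c * #{q ∈ Q | ∃ i, t < ℓ q i} := by
  rw [← sum_filter_of_ne (p := fun q => ∃ i, t < ℓ q i)]
  · calc ∑ q ∈ Q with ∃ i, t < ℓ q i, ∑ i, (if t < ℓ q i then c else 0)
        ≤ ∑ q ∈ Q with ∃ i, t < ℓ q i, nmax * c := by
          refine sum_le_sum fun q hq => ?_
          calc ∑ i, (if t < ℓ q i then c else 0) ≤ ∑ _i : κ q, c :=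
                sum_le_sum fun i _ => by split_ifs <;> simp [hc]
            _ ≤ nmax * c := by
                rw [sum_const, card_univ, nsmul_eq_mul]
                exact mul_le_mul_of_nonneg_right (hcard q (mem_filter.1 hq).1) hc
      _ = nmax * c * #{q ∈ Q | ∃ i, t < ℓ q i} := by rw [sum_const, nsmul_eq_mul, mul_comm]
  · intro q _ hq
    by_contra hne
    obtain ⟨i, -, hi⟩ := exists_ne_zero_of_sum_ne_zero hq
    exact hne ⟨i, by by_contra h; simp [h] at hi⟩

theorem sum_sum_ite_lt_le_div {nmax t g c x₀ R : ℝ} (hnmax : 0 ≤ nmax)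
    (hcard : ∀ q ∈ Q, (Fintype.card (κ q) : ℝ) ≤ nmax) (hR : 0 ≤ R) (hg : 0 < g) (hc : 0 ≤ c)
    (hI : ∀ q ∈ Q, ∀ i, (I q i).Nonempty ∧ I q i ⊆ Icc x₀ (x₀ + R))
    (hgR : ∀ q ∈ Q, ∀ i, t < ℓ q i → g ≤ R)
    (hsep : ∀ q ∈ Q, ∀ r ∈ Q, q ≠ r → ∀ i j, t < ℓ q i → t < ℓ r j →
      ∀ x ∈ I q i, ∀ y ∈ I r j, g ≤ |x - y|) :
    ∑ q ∈ Q, ∑ i, (if t < ℓ q i then c else 0) ≤ 2 * nmax * R * c / g := by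
  rw [le_div_iff₀ hg]
  calc (∑ q ∈ Q, ∑ i, if t < ℓ q i then c else 0) * g
      ≤ nmax * c * (#{q ∈ Q | ∃ i, t < ℓ q i} * g) := by
        rw [← mul_assoc]
        exact mul_le_mul_of_nonneg_right (sum_sum_ite_lt_le ℓ Q hcard t hc) hg.le
    _ ≤ nmax * c * (2 * R) := mul_le_mul_of_nonneg_left
        (card_filter_exists_lt_mul_le I ℓ Q hR hg hI hgR hsep) (by positivity)
    _ = 2 * nmax * R * c := by ring

theorem exists_sum_sum_le_dyadic_layers {σ : ℝ} (hσ : 0 < σ) :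
    ∃ K : ℕ, ∑ q ∈ Q, ∑ i, ℓ q i ≤ ∑ q ∈ Q, ∑ i, (if 0 < ℓ q i then σ else 0) +
      ∑ k ∈ range K, ∑ q ∈ Q, ∑ i, if σ * 2 ^ k < ℓ q i then σ * 2 ^ k else 0 := by
  obtain ⟨M, hM⟩ : BddAbove (⋃ q ∈ Q, range (ℓ q)) :=
    (Q.finite_toSet.biUnion fun q _ => finite_range (ℓ q)).bddAbove
  obtain ⟨K, hK⟩ := pow_unbounded_of_one_lt (M / σ) one_lt_two
  have hℓK : ∀ q ∈ Q, ∀ i, ℓ q i ≤ σ * 2 ^ K := fun q hq i => by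
    have : ℓ q i ≤ M := hM (mem_biUnion hq (mem_range_self i))
    rw [div_lt_iff₀ hσ] at hK
    linarith
  refine ⟨K, (sum_le_sum fun q hq => sum_le_sum fun i _ =>
    (min_eq_left (hℓK q hq i)).symm.le.trans (min_le_dyadic_layers _ _ _)).trans_eq ?_⟩
  simp only [sum_add_distrib]
  congr 1
  rw [sum_comm (s := range K)]
  exact sum_congr rfl fun q _ => sum_comm

theorem sum_sum_le_of_separated {nmax C w R₂ R x₀ σ : ℝ} (hnmax : 0 ≤ nmax) (hC : 0 < C)
    (hw : 0 < w) (hR₂ : 0 < R₂) (hR₂R : R₂ ≤ R) (hσ : 0 < σ)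
    (hcard : ∀ q ∈ Q, (Fintype.card (κ q) : ℝ) ≤ nmax)
    (hI : ∀ q ∈ Q, ∀ i, (I q i).Nonempty ∧ I q i ⊆ Icc x₀ (x₀ + R))
    (hshort : ∀ q ∈ Q, ∀ i, C * ℓ q i ^ (1 + w) ≤ R)
    (hsep : ∀ q ∈ Q, ∀ r ∈ Q, q ≠ r → ∀ i j, ∀ x ∈ I q i, ∀ y ∈ I r j,
      max R₂ (C * min (ℓ q i) (ℓ r j) ^ (1 + w)) ≤ |x - y|) :
    ∑ q ∈ Q, ∑ i, ℓ q i ≤ 2 * nmax * R * (σ / R₂ + 1 / (C * σ ^ w * (1 - (2 ^ w)⁻¹))) := by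
  have hR : 0 ≤ R := hR₂.le.trans hR₂R
  have hbase := sum_sum_ite_lt_le_div I ℓ Q (t := 0) hnmax hcard hR hR₂ hσ.le hI
    (fun _ _ _ _ => hR₂R) fun q hq r hr hqr i j _ _ x hx y hy =>
      (le_max_left _ _).trans (hsep q hq r hr hqr i j x hx y hy)
  have hdyadic (k : ℕ) : ∑ q ∈ Q, ∑ i, (if σ * 2 ^ k < ℓ q i then σ * 2 ^ k else 0) ≤
      2 * nmax * R / (C * σ ^ w) * ((2 ^ w)⁻¹) ^ k := by
    set t := σ * 2 ^ k
    have ht : 0 < t := by positivity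
    have hmono (s : ℝ) (hs : t < s) : C * t ^ (1 + w) ≤ C * s ^ (1 + w) :=
      mul_le_mul_of_nonneg_left (Real.rpow_le_rpow ht.le hs.le (by linarith)) hC.le
    refine (sum_sum_ite_lt_le_div I ℓ Q hnmax hcard hR (by positivity) ht.le hI
      (fun q hq i hi => (hmono _ hi).trans (hshort q hq i))
      fun q hq r hr hqr i j hi hj x hx y hy => (hmono _ (lt_min hi hj)).trans
        ((le_max_right _ _).trans (hsep q hq r hr hqr i j x hx y hy))).trans_eq ?_
    rw [Real.rpow_one_add' ht.le (by linarith), Real.mul_rpow hσ.le (by positivity),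
      ← Real.rpow_pow_comm (by norm_num), inv_pow]
    field_simp
  obtain ⟨K, hK⟩ := exists_sum_sum_le_dyadic_layers ℓ Q hσ
  have hgeom : ∑ k ∈ range K, ((2 : ℝ) ^ w)⁻¹ ^ k ≤ 1 / (1 - (2 ^ w)⁻¹) := by
    simpa using geom_sum_Ico_le_of_lt_one (m := 0) (n := K) (by positivity)
      (inv_lt_one_of_one_lt₀ (Real.one_lt_rpow one_lt_two hw))
  calc ∑ q ∈ Q, ∑ i, ℓ q i
      ≤ 2 * nmax * R * σ / R₂ + ∑ k ∈ range K, 2 * nmax * R / (C * σ ^ w) * ((2 ^ w)⁻¹) ^ k :=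
        hK.trans (add_le_add hbase (sum_le_sum fun k _ => hdyadic k))
    _ ≤ 2 * nmax * R * σ / R₂ + 2 * nmax * R / (C * σ ^ w) * (1 / (1 - (2 ^ w)⁻¹)) := by
        rw [← mul_sum]
        gcongr
    _ = 2 * nmax * R * (σ / R₂ + 1 / (C * σ ^ w * (1 - (2 ^ w)⁻¹))) := by
        field_simp

end Families

theorem exists_pos_sum_le {C w δ : ℝ} (hC : 0 < C) (hw : 0 < w) (hδ : 0 < δ) :
    ∃ R₂ σ : ℝ, 0 < R₂ ∧ 0 < σ ∧ σ / R₂ + 1 / (C * σ ^ w * (1 - (2 ^ w)⁻¹)) ≤ δ := by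
  have hc : 0 < 1 - ((2 : ℝ) ^ w)⁻¹ :=
    sub_pos.2 (inv_lt_one_of_one_lt₀ (Real.one_lt_rpow one_lt_two hw))
  generalize 1 - ((2 : ℝ) ^ w)⁻¹ = c at hc ⊢
  set σ := (2 / (δ * C * c)) ^ w⁻¹
  have hσ : 0 < σ := by positivity
  have hσw : σ ^ w = 2 / (δ * C * c) := Real.rpow_inv_rpow (by positivity) hw.ne'
  refine ⟨2 * σ / δ, σ, by positivity, hσ, le_of_eq ?_⟩
  rw [hσw]
  field_simp
  ring

theorem mul_rpow_le_of_mul_min_rpow_le_abs_sub {x y x₀ R C w a b : ℝ}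
    (hx : x ∈ Icc x₀ (x₀ + R)) (hy : y ∈ Icc x₀ (x₀ + R))
    (hsep : C * min a b ^ (1 + w) ≤ |x - y|) (hb : R < C * b ^ (1 + w)) :
    C * a ^ (1 + w) ≤ R := by
  have hxy : |x - y| ≤ R := by simpa [Real.dist_eq] using Real.dist_le_of_mem_Icc hx hy
  rcases min_choice a b with h | h <;> rw [h] at hsep <;> linarith

theorem exists_div_le_of_le_sum {κ : Type*} [Fintype κ] [Nonempty κ] {f : κ → ℝ} {n s : ℝ}
    (hn : 0 < n) (hcard : (Fintype.card κ : ℝ) ≤ n) (hs : 0 ≤ s) (h : s ≤ ∑ i, f i) :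
    ∃ i, s / n ≤ f i := by
  obtain ⟨i, -, hi⟩ := exists_le_of_sum_le (f := fun _ => s / n) (g := f) univ_nonempty <| by
    rw [sum_const, card_univ, nsmul_eq_mul]
    calc (Fintype.card κ : ℝ) * (s / n) ≤ n * (s / n) := by gcongr
      _ = s := mul_div_cancel₀ s hn.ne'
      _ ≤ ∑ i, f i := h
  exact ⟨i, hi⟩

/-- Combinatorial lemma on families of good intervals (Lemma 4.3). The interval
`I = [x₀, x₀ + R]` is partitioned into closed intervals with pairwise disjoint interiors:
the "bad" intervals `J i` and the "good" families `Jb p i` (`1 ≤ p ≤ m`, `i < np p ≤ n_max`).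
If the good intervals cover at least `(1−ε)R` of `I` and good intervals from different
families are far apart, then some family contains an interval of length `≥ R/(32 n_max)`
and that family covers at least `(3/4)R`. -/
theorem combinatorial_interval_lemma
    (C w nmax : ℝ) (hC : 0 < C) (hw : 0 < w) (hnmax : 0 < nmax) :
    ∃ R₂ : ℝ, 0 < R₂ ∧
      ∀ ε : ℝ, ε ∈ Set.Ioo (0 : ℝ) (1 / 1000) →
      ∀ R x₀ : ℝ, R₂ ≤ R →
      ∀ (n₀ m : ℕ) (np : Fin m → ℕ)
        (J : Fin n₀ → Set ℝ) (Jb : (p : Fin m) → Fin (np p) → Set ℝ),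
        (∀ p, (np p : ℝ) ≤ nmax) →
        (∀ i, ∃ a b : ℝ, a ≤ b ∧ J i = Icc a b) →
        (∀ p i, ∃ a b : ℝ, a ≤ b ∧ Jb p i = Icc a b) →
        ((⋃ i, J i) ∪ (⋃ p, ⋃ i, Jb p i) = Icc x₀ (x₀ + R)) →
        (∀ i j, i ≠ j → Disjoint (interior (J i)) (interior (J j))) →
        (∀ (p q : Fin m) (i : Fin (np p)) (j : Fin (np q)),
          (Sigma.mk p i : Σ p, Fin (np p)) ≠ Sigma.mk q j →
          Disjoint (interior (Jb p i)) (interior (Jb q j))) →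
        (∀ (i : Fin n₀) (p : Fin m) (j : Fin (np p)),
          Disjoint (interior (J i)) (interior (Jb p j))) →
        ((1 - ε) * R ≤ ∑ p : Fin m, ∑ i : Fin (np p), (volume (Jb p i)).toReal) →
        (∀ p q : Fin m, p ≠ q → ∀ (i : Fin (np p)) (j : Fin (np q)),
          ∀ x ∈ Jb p i, ∀ y ∈ Jb q j,
            max R₂
              (C * (min (volume (Jb p i)).toReal (volume (Jb q j)).toReal) ^ (1 + w))
              ≤ |x - y|) →
        ∃ (p₀ : Fin m) (i₀ : Fin (np p₀)),
          R / (32 * nmax) ≤ (volume (Jb p₀ i₀)).toReal ∧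
          (3 / 4 : ℝ) * R ≤ ∑ i : Fin (np p₀), (volume (Jb p₀ i)).toReal := by
  obtain ⟨R₂, σ, hR₂, hσ, hsmall⟩ := exists_pos_sum_le hC hw (δ := 1 / (10 * nmax)) (by positivity)
  refine ⟨R₂, hR₂, fun ε hε R x₀ hR₂R n₀ m np J Jb hnp _ hJb hunion _ _ _ hsum hdist => ?_⟩
  set ℓ : (p : Fin m) → Fin (np p) → ℝ := fun p i => (volume (Jb p i)).toReal
  have hR : 0 < R := hR₂.trans_le hR₂R
  have hI : ∀ p i, (Jb p i).Nonempty ∧ Jb p i ⊆ Icc x₀ (x₀ + R) := fun p i => by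
    obtain ⟨a, b, hab, h⟩ := hJb p i
    refine ⟨h ▸ nonempty_Icc.2 hab, hunion ▸ ?_⟩
    exact (subset_iUnion₂ (s := fun p i => Jb p i) p i).trans subset_union_right
  have hshort : ∀ Q : Finset (Fin m), (∀ q ∈ Q, ∀ i, C * ℓ q i ^ (1 + w) ≤ R) →
      ∑ q ∈ Q, ∑ i, ℓ q i ≤ R / 5 := fun Q hQ => by
    refine (sum_sum_le_of_separated Jb ℓ Q hnmax.le hC hw hR₂ hR₂R hσ
      (by simpa using fun q _ => hnp q)
      (fun q _ => hI q) hQ fun q _ r _ hqr => hdist q r hqr).trans ?_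
    calc _ ≤ 2 * nmax * R * (1 / (10 * nmax)) := by gcongr
      _ = R / 5 := by field_simp; ring
  by_cases hlong : ∃ p i, R < C * ℓ p i ^ (1 + w)
  · obtain ⟨p₀, i₁, hi₁⟩ := hlong
    have hrest : ∀ q ∈ univ.erase p₀, ∀ i, C * ℓ q i ^ (1 + w) ≤ R := fun q hq i => by
      obtain ⟨⟨x, hx⟩, hxI⟩ := hI q i
      obtain ⟨⟨y, hy⟩, hyI⟩ := hI p₀ i₁
      exact mul_rpow_le_of_mul_min_rpow_le_abs_sub (hxI hx) (hyI hy)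
        ((le_max_right _ _).trans (hdist q p₀ (ne_of_mem_erase hq) i i₁ x hx y hy)) hi₁
    have hfam : 3 / 4 * R ≤ ∑ i, ℓ p₀ i := by
      rw [← add_sum_erase _ _ (mem_univ p₀)] at hsum
      nlinarith [hshort _ hrest, hε.2]
    have : Nonempty (Fin (np p₀)) := ⟨i₁⟩
    obtain ⟨i₀, hi₀⟩ := exists_div_le_of_le_sum (f := ℓ p₀) (s := R / 32) hnmax
      (by simpa using hnp p₀) (by positivity) (by linarith)
    exact ⟨p₀, i₀, by rwa [← div_div], hfam⟩
  · push Not at hlong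
    nlinarith [hshort univ fun q _ i => hlong q i, hε.2]
end

section
/- Let (X, μ) be a probability space, Y a metric space, and (ψ_n)_{n∈ℕ} a sequence of measurable maps ψ_n : X → Y. Suppose that for every k ∈ ℕ the triplet (W^{(k)}, {n_i^{(k)}}, δ_k) is well behaved, where δ_k < 1/4 for all k and δ_k → 0 as k → ∞. Then for every ε > 0 there exist a measurable set K ⊆ ∩_{k∈ℕ} W^{(k)} with μ(K) > μ(∩_{k∈ℕ} W^{(k)}) − ε and measurable functions n_i : K → ℕ (i ∈ ℕ) such that the triplet (K, {n_i}, 0) is well behaved. -/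
open MeasureTheory Filter

/-- The lower density of a set `S ⊆ ℕ`: `liminf_{k→∞} #(S ∩ [1,k]) / k`. -/
noncomputable def lowerDensity (S : Set ℕ) : ℝ :=
  Filter.liminf (fun k : ℕ => ((S ∩ Set.Icc 1 k).ncard : ℝ) / k) Filter.atTop

/-- The triplet `(W, {n i}, ε)` is *well behaved* for the sequence of maps `ψ`:
`W` is measurable, each `n i` is measurable on `W`, `i ↦ n i x` is strictly increasing,
the range `{n i x : i ∈ ℕ}` has lower density at least `1 − ε` for every `x ∈ W`, and
`ψ (n i x) x` converges, uniformly in `x ∈ W`, to some map `φ`. -/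
def WellBehaved {X Y : Type*} [MeasurableSpace X] [MetricSpace Y]
    (ψ : ℕ → X → Y) (W : Set X) (n : ℕ → X → ℕ) (ε : ℝ) : Prop :=
  MeasurableSet W ∧
  (∀ i, Measurable (W.restrict (n i))) ∧
  (∀ x ∈ W, StrictMono fun i => n i x) ∧
  (∀ x ∈ W, 1 - ε ≤ lowerDensity {m : ℕ | ∃ i, n i x = m}) ∧
  ∃ φ : X → Y, TendstoUniformlyOn (fun i x => ψ (n i x) x) φ atTop W


/-!
The limits `φ k` of the given triplets agree on `⋂ k, W k`, because two index sets of lower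
density above `3/4` meet infinitely often. Dropping finitely many indices of the `k`-th triplet
leaves a set `G k x` along which `ψ m x` is `1/(k+1)`-close to the limit and which, for some
`γ k > δ k` with `γ k → 0`, misses at most `γ k * T` points of `[1, T]` once `T` passes a
threshold depending on `x`. Off a set of measure `< ε` these thresholds are bounded by
constants, and gluing the `G k x` along windows `[τ k, τ (k+1))` with `τ (k+1) ≥ τ k / γ k`
gives a set of density one along which `ψ m x` converges uniformly; its increasing enumeration
is the new index sequence.
-/

open Set Topology

lemma ncard_inter_Icc_add_ncard_Icc_diff (S : Set ℕ) (T : ℕ) :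
    (S ∩ Icc 1 T).ncard + (Icc 1 T \ S).ncard = T := by
  rw [inter_comm, ncard_inter_add_ncard_sdiff_eq_ncard _ _ (finite_Icc 1 T), ncard_Icc_nat,
    Nat.add_sub_cancel]

lemma eventually_lt_ncard_inter_Icc {S : Set ℕ} {a : ℝ} (h : a < lowerDensity S) :
    ∀ᶠ T : ℕ in atTop, a * T < (S ∩ Icc 1 T).ncard := by
  have hbdd : IsBoundedUnder (· ≥ ·) atTop fun T : ℕ => ((S ∩ Icc 1 T).ncard : ℝ) / T :=
    isBoundedUnder_of ⟨0, fun T => by positivity⟩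
  filter_upwards [eventually_lt_of_lt_liminf h hbdd, eventually_gt_atTop 0] with T hT hT0
  rwa [lt_div_iff₀ (by exact_mod_cast hT0)] at hT

lemma lowerDensity_eq_one_of_ncard_Icc_diff {S : Set ℕ}
    (h : ∀ η > 0, ∀ᶠ T : ℕ in atTop, ((Icc 1 T \ S).ncard : ℝ) ≤ η * T) :
    lowerDensity S = 1 := by
  have hsum (T : ℕ) : ((S ∩ Icc 1 T).ncard : ℝ) + (Icc 1 T \ S).ncard = T := by
    exact_mod_cast ncard_inter_Icc_add_ncard_Icc_diff S T
  refine Tendsto.liminf_eq (tendsto_order.2 ⟨fun a ha => ?_, fun a ha => ?_⟩)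
  · filter_upwards [h ((1 - a) / 2) (by linarith), eventually_gt_atTop 0] with T hT hT0
    have hT0' : (0 : ℝ) < T := by exact_mod_cast hT0
    rw [lt_div_iff₀ hT0']
    nlinarith [hsum T]
  · refine Eventually.of_forall fun T => lt_of_le_of_lt ?_ ha
    exact div_le_one_of_le₀ (by linarith [hsum T, (Icc 1 T \ S).ncard.cast_nonneg (α := ℝ)])
      T.cast_nonneg

lemma lowerDensity_univ : lowerDensity univ = 1 :=
  lowerDensity_eq_one_of_ncard_Icc_diff fun η hη =>
    Eventually.of_forall fun T => by rw [sdiff_univ, ncard_empty, Nat.cast_zero]; positivity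

lemma infinite_inter_of_one_lt_lowerDensity_add {S S' : Set ℕ}
    (h : 1 < lowerDensity S + lowerDensity S') : (S ∩ S').Infinite := by
  intro hfin
  set η := (lowerDensity S + lowerDensity S' - 1) / 3 with hη_def
  have hη : 0 < η := by linarith
  have hC : ∀ᶠ T : ℕ in atTop, ((S ∩ S').ncard : ℝ) < η * T :=
    (tendsto_natCast_atTop_atTop.const_mul_atTop hη).eventually_gt_atTop _
  obtain ⟨T, hST, hS'T, hCT⟩ := ((eventually_lt_ncard_inter_Icc (S := S) (a := lowerDensity S - η)
    (by linarith)).and ((eventually_lt_ncard_inter_Icc (S := S') (a := lowerDensity S' - η)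
    (by linarith)).and hC)).exists
  have hcount : (S ∩ Icc 1 T).ncard + (S' ∩ Icc 1 T).ncard ≤ T + (S ∩ S').ncard := by
    rw [← ncard_union_add_ncard_inter _ _ ((finite_Icc 1 T).inter_of_right S)
      ((finite_Icc 1 T).inter_of_right S')]
    refine add_le_add ?_ (ncard_le_ncard (fun m hm => ⟨hm.1.1, hm.2.1⟩) hfin)
    exact (ncard_le_ncard (union_subset inter_subset_right inter_subset_right)).trans (by simp)
  have hcount' : ((S ∩ Icc 1 T).ncard : ℝ) + (S' ∩ Icc 1 T).ncard ≤ T + (S ∩ S').ncard := by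
    exact_mod_cast hcount
  have : (lowerDensity S - η) * T + (lowerDensity S' - η) * T = T + η * T := by
    rw [hη_def]; ring
  linarith

lemma infinite_of_lowerDensity_pos {S : Set ℕ} (h : 0 < lowerDensity S) : S.Infinite := by
  simpa using infinite_inter_of_one_lt_lowerDensity_add (S' := univ)
    (by rw [lowerDensity_univ]; linarith)

lemma eventually_ncard_Icc_diff_le {S G F : Set ℕ} {δ γ : ℝ} (hS : 1 - δ ≤ lowerDensity S)
    (hδγ : δ < γ) (hF : F.Finite) (hSGF : S ⊆ G ∪ F) :
    ∀ᶠ T : ℕ in atTop, ((Icc 1 T \ G).ncard : ℝ) ≤ γ * T := by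
  set η := (γ - δ) / 2 with hη_def
  have hF' : ∀ᶠ T : ℕ in atTop, (F.ncard : ℝ) ≤ η * T :=
    (tendsto_natCast_atTop_atTop.const_mul_atTop (by linarith)).eventually_ge_atTop _
  filter_upwards [eventually_lt_ncard_inter_Icc (a := 1 - δ - η) (by linarith), hF']
    with T hT hFT
  have hsub : Icc 1 T \ G ⊆ (Icc 1 T \ S) ∪ F := by
    rintro m ⟨hmI, hmG⟩
    by_cases hmS : m ∈ S
    · exact Or.inr ((hSGF hmS).resolve_left hmG)
    · exact Or.inl ⟨hmI, hmS⟩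
  have hle : (Icc 1 T \ G).ncard ≤ (Icc 1 T \ S).ncard + F.ncard :=
    (ncard_le_ncard hsub (((finite_Icc 1 T).sdiff).union hF)).trans (ncard_union_le _ _)
  have hle' : ((Icc 1 T \ G).ncard : ℝ) ≤ (Icc 1 T \ S).ncard + F.ncard := by exact_mod_cast hle
  have hsum : ((S ∩ Icc 1 T).ncard : ℝ) + (Icc 1 T \ S).ncard = T := by
    exact_mod_cast ncard_inter_Icc_add_ncard_Icc_diff S T
  have : γ * T = T - (1 - δ - η) * T + η * T := by rw [hη_def]; ring
  linarith

lemma StrictMono.exists_le_lt_succ {τ : ℕ → ℕ} (hτ : StrictMono τ) {j T : ℕ} (hT : τ j ≤ T) :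
    ∃ k, j ≤ k ∧ τ k ≤ T ∧ T < τ (k + 1) := by
  obtain ⟨k, hk, hk'⟩ := hτ.exists_between_of_tendsto_atTop hτ.tendsto_atTop (x := T + 1)
    (by have := hτ.monotone (Nat.zero_le j); omega)
  refine ⟨k, ?_, by omega, by omega⟩
  by_contra! hkj
  have := hτ.monotone (show k + 1 ≤ j by omega)
  omega

lemma exists_strictMono_le_mul_succ (b : ℕ → ℕ) {γ : ℕ → ℝ} (hγ : ∀ k, 0 < γ k) :
    ∃ τ : ℕ → ℕ, StrictMono τ ∧ (∀ k, b k ≤ τ k) ∧ ∀ k, (τ k : ℝ) ≤ γ k * τ (k + 1) := by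
  obtain ⟨τ, hzero, hsucc⟩ : ∃ τ : ℕ → ℕ, τ 0 = b 0 ∧
      ∀ k, τ (k + 1) = max (τ k + 1) (max (b (k + 1)) ⌈(τ k : ℝ) / γ k⌉₊) :=
    ⟨fun k => Nat.rec (b 0) (fun k t => max (t + 1) (max (b (k + 1)) ⌈(t : ℝ) / γ k⌉₊)) k,
      rfl, fun k => rfl⟩
  refine ⟨τ, strictMono_nat_of_lt_succ fun k => ?_, fun k => ?_, fun k => ?_⟩
  · rw [hsucc]; omega
  · cases k with
    | zero => exact hzero.ge
    | succ k => rw [hsucc]; omega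
  · rw [← div_le_iff₀' (hγ k)]
    exact (Nat.le_ceil _).trans (by rw [hsucc]; exact_mod_cast by omega)

def glue (G : ℕ → Set ℕ) (τ : ℕ → ℕ) : Set ℕ :=
  ⋃ k, G k ∩ Ico (τ k) (τ (k + 1))

section Glue

variable {G : ℕ → Set ℕ} {τ : ℕ → ℕ}

lemma exists_le_mem_of_mem_glue (hτ : StrictMono τ) {m j : ℕ} (hm : m ∈ glue G τ)
    (hjm : τ j ≤ m) : ∃ k, j ≤ k ∧ m ∈ G k := by
  obtain ⟨k, hmG, -, hmk⟩ := mem_iUnion.1 hm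
  refine ⟨k, ?_, hmG⟩
  by_contra! hkj
  have := hτ.monotone (show k + 1 ≤ j by omega)
  omega

lemma ncard_Icc_diff_glue_le {k T : ℕ} (hT : T < τ (k + 2)) :
    (Icc 1 T \ glue G τ).ncard ≤
      τ k + (Icc 1 (τ (k + 1)) \ G k).ncard + (Icc 1 T \ G (k + 1)).ncard := by
  have hsub : Icc 1 T \ glue G τ ⊆
      Iio (τ k) ∪ (Icc 1 (τ (k + 1)) \ G k) ∪ (Icc 1 T \ G (k + 1)) := by
    rintro m ⟨⟨hm₁, hmT⟩, hm⟩
    simp only [glue, mem_iUnion, mem_inter_iff, mem_Ico, not_exists, not_and] at hm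
    simp only [mem_union, mem_Iio, Set.mem_sdiff, mem_Icc]
    by_cases hmk : m < τ k
    · exact Or.inl (Or.inl hmk)
    by_cases hmk' : m < τ (k + 1)
    · exact Or.inl (Or.inr ⟨⟨hm₁, hmk'.le⟩, fun hmG => hm k hmG (by omega) hmk'⟩)
    · exact Or.inr ⟨⟨hm₁, hmT⟩,
        fun hmG => hm (k + 1) hmG (by omega) (by simpa using hT.trans_le' hmT)⟩
  calc (Icc 1 T \ glue G τ).ncard
      ≤ (Iio (τ k) ∪ (Icc 1 (τ (k + 1)) \ G k) ∪ (Icc 1 T \ G (k + 1))).ncard :=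
        ncard_le_ncard hsub (by apply_rules [Finite.union, finite_Iio, Finite.sdiff, finite_Icc])
    _ ≤ τ k + (Icc 1 (τ (k + 1)) \ G k).ncard + (Icc 1 T \ G (k + 1)).ncard := by
        refine (ncard_union_le _ _).trans (add_le_add ?_ le_rfl)
        exact (ncard_union_le _ _).trans_eq (by rw [ncard_Iio_nat])

lemma lowerDensity_glue_eq_one {γ : ℕ → ℝ} (hτ : StrictMono τ) (hγ : Tendsto γ atTop (𝓝 0))
    (hG : ∀ k T, τ k ≤ T → ((Icc 1 T \ G k).ncard : ℝ) ≤ γ k * T)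
    (hτγ : ∀ k, (τ k : ℝ) ≤ γ k * τ (k + 1)) :
    lowerDensity (glue G τ) = 1 := by
  refine lowerDensity_eq_one_of_ncard_Icc_diff fun η hη => ?_
  obtain ⟨k₀, hk₀⟩ := eventually_atTop.1 (hγ.eventually (gt_mem_nhds (by positivity : 0 < η / 3)))
  filter_upwards [eventually_ge_atTop (τ (k₀ + 1))] with T hT
  obtain ⟨k, hk, hkT, hTk⟩ := StrictMono.exists_le_lt_succ (τ := fun k => τ (k + 1))
    (fun a b hab => hτ (by omega)) hT
  have hγ_nonneg (k : ℕ) : 0 ≤ γ k :=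
    nonneg_of_mul_nonneg_left ((Nat.cast_nonneg _).trans (hτγ k))
      (by exact_mod_cast (Nat.zero_le _).trans_lt (hτ k.lt_succ_self))
  -- each of the three terms in `ncard_Icc_diff_glue_le` is at most `η / 3 * T`
  have hkT' : (τ (k + 1) : ℝ) ≤ T := by exact_mod_cast hkT
  have hcount : ((Icc 1 T \ glue G τ).ncard : ℝ) ≤
      τ k + (Icc 1 (τ (k + 1)) \ G k).ncard + (Icc 1 T \ G (k + 1)).ncard := by
    exact_mod_cast ncard_Icc_diff_glue_le hTk
  have h₁ := (hτγ k).trans (mul_le_mul_of_nonneg_left hkT' (hγ_nonneg k))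
  have h₂ := (hG k _ (hτ k.lt_succ_self).le).trans (mul_le_mul_of_nonneg_left hkT' (hγ_nonneg k))
  have h₃ := hG (k + 1) T hkT
  have hγk : γ k * T ≤ η / 3 * T := mul_le_mul_of_nonneg_right (hk₀ k (by omega)).le T.cast_nonneg
  have hγk' : γ (k + 1) * T ≤ η / 3 * T :=
    mul_le_mul_of_nonneg_right (hk₀ (k + 1) (by omega)).le T.cast_nonneg
  linarith

end Glue

section Measurability

variable {X : Type*} [MeasurableSpace X]

lemma measurable_card_filter {β : Type*} {p : X → β → Prop} [∀ x, DecidablePred (p x)]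
    (s : Finset β) (hp : ∀ b, MeasurableSet {x | p x b}) :
    Measurable fun x => (s.filter (p x)).card := by
  simp_rw [Finset.card_filter]
  exact Finset.measurable_sum _ fun b _ => Measurable.ite (hp b) measurable_const measurable_const

lemma measurable_ncard_Icc_diff {G : X → Set ℕ} (hG : ∀ m, MeasurableSet {x | m ∈ G x})
    (T : ℕ) : Measurable fun x => (Icc 1 T \ G x).ncard := by
  classical
  have h (x : X) : (Icc 1 T \ G x).ncard = ((Finset.Icc 1 T).filter (· ∉ G x)).card := by
    rw [← ncard_coe_finset, Finset.coe_filter]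
    congr 1
    ext m
    simp
  simp_rw [h]
  exact measurable_card_filter _ fun m => (hG m).compl

lemma measurable_nth {S : X → Set ℕ} (hS : ∀ m, MeasurableSet {x | m ∈ S x})
    (hinf : ∀ x, (S x).Infinite) (i : ℕ) : Measurable fun x => Nat.nth (· ∈ S x) i := by
  classical
  have hcount (m : ℕ) : Measurable fun x => Nat.count (· ∈ S x) m := by
    convert measurable_card_filter (Finset.range m) hS using 2 with x
    exact Nat.count_eq_card_filter_range _ _
  refine measurable_to_countable' fun m => ?_
  have : (fun x => Nat.nth (· ∈ S x) i) ⁻¹' {m} =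
      {x | m ∈ S x} ∩ (fun x => Nat.count (· ∈ S x) m) ⁻¹' {i} := by
    ext x
    constructor
    · rintro rfl
      exact ⟨Nat.nth_mem_of_infinite (hinf x) i,
        Nat.count_nth_of_infinite (p := (· ∈ S x)) (hinf x) i⟩
    · rintro ⟨hm, rfl⟩
      exact Nat.nth_count hm
  rw [this]
  exact (hS m).inter (hcount m (measurableSet_singleton i))

lemma measurableSet_mem_glue {G : ℕ → X → Set ℕ} (hG : ∀ k m, MeasurableSet {x | m ∈ G k x})
    (τ : ℕ → ℕ) (m : ℕ) : MeasurableSet {x | m ∈ glue (G · x) τ} := by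
  simp only [glue, mem_iUnion, mem_inter_iff, ofPred_exists, ofPred_and]
  exact .iUnion fun k => (hG k m).inter (.const _)

lemma exists_measure_sdiff_lt_of_monotone (μ : Measure X) [IsFiniteMeasure μ] {A : Set X}
    (hA : MeasurableSet A) {E : ℕ → Set X} (hE : ∀ b, MeasurableSet (E b)) (hmono : Monotone E)
    (hcover : A ⊆ ⋃ b, E b) {ε : ENNReal} (hε : 0 < ε) : ∃ b, μ (A \ E b) < ε := by
  have hlim := tendsto_measure_iInter_atTop (μ := μ) (fun b => (hA.diff (hE b)).nullMeasurableSet)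
    (fun b b' h => sdiff_subset_sdiff_right (hmono h)) ⟨0, measure_ne_top μ _⟩
  rw [← sdiff_iUnion, sdiff_eq_empty.2 hcover, measure_empty] at hlim
  exact (hlim.eventually (gt_mem_nhds hε)).exists

lemma exists_measure_sdiff_iInter_lt (μ : Measure X) [IsFiniteMeasure μ] {A : Set X}
    (hA : MeasurableSet A) {E : ℕ → ℕ → Set X} (hE : ∀ k b, MeasurableSet (E k b))
    (hmono : ∀ k, Monotone (E k)) (hcover : ∀ k, A ⊆ ⋃ b, E k b) {ε : ENNReal} (hε : ε ≠ 0) :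
    ∃ b : ℕ → ℕ, μ (A \ ⋂ k, E k (b k)) < ε := by
  obtain ⟨ε', hε'0, hε'⟩ := ENNReal.exists_pos_sum_of_countable hε ℕ
  choose b hb using fun k => exists_measure_sdiff_lt_of_monotone μ hA (hE k) (hmono k) (hcover k)
    (ENNReal.coe_pos.2 (hε'0 k))
  refine ⟨b, ?_⟩
  calc μ (A \ ⋂ k, E k (b k)) = μ (⋃ k, A \ E k (b k)) := by rw [sdiff_iInter]
    _ ≤ ∑' k, μ (A \ E k (b k)) := measure_iUnion_le _
    _ ≤ ∑' k, (ε' k : ENNReal) := ENNReal.tsum_le_tsum fun k => (hb k).le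
    _ < ε := hε'

end Measurability

lemma tendsto_cofinite_inf_principal_range {Y : Type*} [TopologicalSpace Y] {u : ℕ → Y}
    {f : ℕ → ℕ} {a : Y} (hf : Tendsto (u ∘ f) atTop (𝓝 a)) :
    Tendsto u (cofinite ⊓ 𝓟 (range f)) (𝓝 a) := by
  intro V hV
  have hB : {i | u (f i) ∉ V}.Finite := by
    rw [← Nat.cofinite_eq_atTop] at hf
    exact hf hV
  refine mem_inf_of_inter (hB.image f).compl_mem_cofinite (mem_principal_self _) ?_
  rintro _ ⟨hm, i, rfl⟩
  by_contra hi
  exact hm ⟨i, hi, rfl⟩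

lemma eq_of_tendsto_comp_of_infinite_inter {Y : Type*} [TopologicalSpace Y] [T2Space Y]
    {u : ℕ → Y} {f g : ℕ → ℕ} {a b : Y} (hf : Tendsto (u ∘ f) atTop (𝓝 a))
    (hg : Tendsto (u ∘ g) atTop (𝓝 b)) (h : (range f ∩ range g).Infinite) : a = b := by
  have := h.cofinite_inf_principal_neBot
  exact tendsto_nhds_unique
    ((tendsto_cofinite_inf_principal_range hf).mono_left (inf_le_inf_left _
      (principal_mono.2 inter_subset_left)))
    ((tendsto_cofinite_inf_principal_range hg).mono_left (inf_le_inf_left _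
      (principal_mono.2 inter_subset_right)))

section WellBehaved

variable {X Y : Type*} [MeasurableSpace X] [MetricSpace Y] {ψ : ℕ → X → Y}

lemma WellBehaved.exists_measurable {W : Set X} {n : ℕ → X → ℕ} {ε : ℝ}
    (h : WellBehaved ψ W n ε) :
    ∃ n' : ℕ → X → ℕ, (∀ i, Measurable (n' i)) ∧ WellBehaved ψ W n' ε := by
  classical
  obtain ⟨hW, hn, hmono, hdens, φ, hφ⟩ := h
  have heq (i : ℕ) {x : X} (hx : x ∈ W) : W.piecewise (n i) 0 x = n i x :=
    piecewise_eq_of_mem _ _ _ hx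
  have hrestrict (i : ℕ) : Measurable (W.domRestrict (W.piecewise (n i) 0)) := by
    rw [domRestrict_piecewise]
    exact hn i
  refine ⟨fun i => W.piecewise (n i) 0, fun i => ?_, hW, hrestrict, fun x hx => ?_,
    fun x hx => ?_, φ, hφ.congr (Eventually.of_forall fun i x hx => ?_)⟩
  · exact measurable_of_restrict_of_restrict_compl hW (hrestrict i)
      (by rw [domRestrict_piecewise_compl]; exact measurable_const)
  · simpa only [heq _ hx] using hmono x hx
  · simpa only [heq _ hx] using hdens x hx
  · simp only [heq _ hx]

lemma wellBehaved_nth {K : Set X} {S : X → Set ℕ} {φ : X → Y} {ε : ℝ} (hK : MeasurableSet K)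
    (hS : ∀ m, MeasurableSet {x | m ∈ S x}) (hinf : ∀ x ∈ K, (S x).Infinite)
    (hdens : ∀ x ∈ K, 1 - ε ≤ lowerDensity (S x))
    (hconv : ∀ η > 0, ∃ N, ∀ x ∈ K, ∀ m ∈ S x, N ≤ m → dist (φ x) (ψ m x) < η) :
    WellBehaved ψ K (fun i x => Nat.nth (· ∈ S x) i) ε := by
  refine ⟨hK, fun i => ?_, fun x hx => Nat.nth_strictMono (hinf x hx), fun x hx => ?_, φ, ?_⟩
  · exact measurable_nth (S := fun x : K => S x) (fun m => measurable_subtype_coe (hS m))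
      (fun x => hinf x x.2) i
  · rw [show {m | ∃ i, Nat.nth (· ∈ S x) i = m} = S x from Nat.range_nth_of_infinite (hinf x hx)]
    exact hdens x hx
  · refine Metric.tendstoUniformlyOn_iff.2 fun η hη => ?_
    obtain ⟨N, hN⟩ := hconv η hη
    filter_upwards [eventually_ge_atTop N] with i hi x hx
    exact hN x hx _ (Nat.nth_mem_of_infinite (hinf x hx) i)
      (hi.trans ((Nat.nth_strictMono (hinf x hx)).id_le i))

lemma exists_tail_selection {W : Set X} {n : ℕ → X → ℕ} {φ : X → Y} {δ γ η : ℝ}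
    (hn : ∀ i, Measurable (n i)) (hφ : TendstoUniformlyOn (fun i x => ψ (n i x) x) φ atTop W)
    (hdens : ∀ x ∈ W, 1 - δ ≤ lowerDensity {m | ∃ i, n i x = m}) (hδγ : δ < γ) (hη : 0 < η) :
    ∃ G : X → Set ℕ, (∀ m, MeasurableSet {x | m ∈ G x}) ∧
      (∀ x ∈ W, ∀ m ∈ G x, dist (φ x) (ψ m x) < η) ∧
      ∀ x ∈ W, ∀ᶠ T : ℕ in atTop, ((Icc 1 T \ G x).ncard : ℝ) ≤ γ * T := by
  obtain ⟨I, hI⟩ := eventually_atTop.1 (Metric.tendstoUniformlyOn_iff.1 hφ η hη)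
  refine ⟨fun x => (n · x) '' Ici I, fun m => ?_, ?_, fun x hx => ?_⟩
  · simp only [mem_image, mem_Ici, ofPred_exists, ofPred_and]
    exact .iUnion fun i => (MeasurableSet.const _).inter (hn i (measurableSet_singleton m))
  · rintro x hx _ ⟨i, hi, rfl⟩
    exact hI i hi x hx
  · refine eventually_ncard_Icc_diff_le (hdens x hx) hδγ ((finite_Iio I).image (n · x)) ?_
    rintro _ ⟨i, rfl⟩
    rcases le_or_gt I i with hi | hi
    exacts [Or.inl ⟨i, hi, rfl⟩, Or.inr ⟨i, hi, rfl⟩]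

end WellBehaved

lemma exists_subset_lowerDensity_glue_eq_one {X : Type*} [MeasurableSpace X] (μ : Measure X)
    [IsFiniteMeasure μ] {A : Set X} (hA : MeasurableSet A) {G : ℕ → X → Set ℕ} {γ : ℕ → ℝ}
    (hGmeas : ∀ k m, MeasurableSet {x | m ∈ G k x})
    (hGdens : ∀ k, ∀ x ∈ A, ∀ᶠ T : ℕ in atTop, ((Icc 1 T \ G k x).ncard : ℝ) ≤ γ k * T)
    (hγpos : ∀ k, 0 < γ k) (hγ : Tendsto γ atTop (𝓝 0)) {ε : ℝ} (hε : 0 < ε) :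
    ∃ K ⊆ A, MeasurableSet K ∧ (μ A).toReal - ε < (μ K).toReal ∧
      ∃ τ : ℕ → ℕ, StrictMono τ ∧ ∀ x ∈ K, lowerDensity (glue (G · x) τ) = 1 := by
  set E : ℕ → ℕ → Set X :=
    fun k b => {x | ∀ T, b ≤ T → ((Icc 1 T \ G k x).ncard : ℝ) ≤ γ k * T}
  have hE (k b : ℕ) : MeasurableSet (E k b) := by
    simp only [E, ofPred_forall]
    exact .iInter fun T => .iInter fun _ =>
      measurableSet_le (measurable_from_nat.comp (measurable_ncard_Icc_diff (hGmeas k) T))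
        measurable_const
  have hmono (k : ℕ) : Monotone (E k) := fun b b' hbb' x hx T hT => hx T (hbb'.trans hT)
  have hcover (k : ℕ) : A ⊆ ⋃ b, E k b := fun x hx =>
    mem_iUnion.2 (eventually_atTop.1 (hGdens k x hx))
  obtain ⟨b, hb⟩ :=
    exists_measure_sdiff_iInter_lt μ hA hE hmono hcover (ENNReal.ofReal_pos.2 hε).ne'
  obtain ⟨τ, hτ, hbτ, hτγ⟩ := exists_strictMono_le_mul_succ b hγpos
  have hK : MeasurableSet (⋂ k, E k (b k)) := .iInter fun k => hE k (b k)
  refine ⟨A ∩ ⋂ k, E k (b k), inter_subset_left, hA.inter hK, ?_, τ, hτ, fun x hx =>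
    lowerDensity_glue_eq_one hτ hγ (fun k T hT => mem_iInter.1 hx.2 k T ((hbτ k).trans hT)) hτγ⟩
  rw [← measure_inter_add_sdiff A hK (μ := μ), ENNReal.toReal_add (measure_ne_top _ _)
    (measure_ne_top _ _)]
  linarith [ENNReal.toReal_lt_of_lt_ofReal hb]

theorem gluing_well_behaved_general
    {X Y : Type*} [MeasurableSpace X] [MetricSpace Y]
    (μ : Measure X) [IsProbabilityMeasure μ]
    (ψ : ℕ → X → Y)
    (W : ℕ → Set X) (nseq : ℕ → ℕ → X → ℕ) (δ : ℕ → ℝ)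
    (hδlt : ∀ k, δ k < 1 / 4)
    (hδ0 : Tendsto δ atTop (nhds 0))
    (hwb : ∀ k, WellBehaved ψ (W k) (nseq k) (δ k)) :
    ∀ ε > (0 : ℝ), ∃ (K : Set X) (m : ℕ → X → ℕ),
      K ⊆ ⋂ k, W k ∧
      (μ (⋂ k, W k)).toReal - ε < (μ K).toReal ∧
      WellBehaved ψ K m 0 := by
  intro ε hε
  choose n hn hwb using fun k => (hwb k).exists_measurable
  choose hW _ _ hdens φ hφ using hwb
  have hφ_eq (k : ℕ) (x : X) (hx : x ∈ ⋂ k, W k) : φ k x = φ 0 x := by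
    rw [mem_iInter] at hx
    refine eq_of_tendsto_comp_of_infinite_inter (u := (ψ · x)) ((hφ k).tendsto_at (hx k))
      ((hφ 0).tendsto_at (hx 0)) (infinite_inter_of_one_lt_lowerDensity_add ?_)
    have hk : 1 - δ k ≤ lowerDensity (range (n k · x)) := hdens k x (hx k)
    have h0 : 1 - δ 0 ≤ lowerDensity (range (n 0 · x)) := hdens 0 x (hx 0)
    linarith [hδlt k, hδlt 0]
  -- `|δ k|` rather than `δ k`: the windows `τ (k + 1) ≥ τ k / γ k` need `γ k > 0`.
  set γ : ℕ → ℝ := fun k => |δ k| + 1 / (k + 1)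
  have hδγ (k : ℕ) : |δ k| < γ k := lt_add_of_pos_right _ Nat.one_div_pos_of_nat
  have hγ : Tendsto γ atTop (𝓝 0) := by
    simpa only [abs_zero, zero_add] using hδ0.abs.add tendsto_one_div_add_atTop_nhds_zero_nat
  choose G hGmeas hGdist hGdens using fun k => exists_tail_selection (hn k) (hφ k)
    (hdens k) ((le_abs_self _).trans_lt (hδγ k)) (Nat.one_div_pos_of_nat (n := k))
  obtain ⟨K, hKW, hK, hμK, τ, hτ, hKdens⟩ := exists_subset_lowerDensity_glue_eq_one μ
    (.iInter hW) hGmeas (fun k x hx => hGdens k x (mem_iInter.1 hx k))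
    (fun k => (abs_nonneg _).trans_lt (hδγ k)) hγ hε
  refine ⟨K, _, hKW, hμK, wellBehaved_nth (φ := φ 0) hK (measurableSet_mem_glue hGmeas τ)
    (fun x hx => infinite_of_lowerDensity_pos (by rw [hKdens x hx]; exact one_pos))
    (fun x hx => by rw [hKdens x hx, sub_zero]) fun η hη => ?_⟩
  obtain ⟨j, hj⟩ := exists_nat_one_div_lt hη
  refine ⟨τ j, fun x hx m hm hjm => ?_⟩
  obtain ⟨k, hjk, hmG⟩ := exists_le_mem_of_mem_glue hτ hm hjm
  calc dist (φ 0 x) (ψ m x) = dist (φ k x) (ψ m x) := by rw [hφ_eq k x (hKW hx)]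
    _ < 1 / (k + 1) := hGdist k x (mem_iInter.1 (hKW hx) k) m hmG
    _ ≤ 1 / (j + 1) := Nat.one_div_le_one_div hjk
    _ < η := hj

/-- Gluing lemma for well-behaved triplets (abstract form of Lemma 10.5). -/
theorem gluing_well_behaved
    {X Y : Type*} [MeasurableSpace X] [MetricSpace Y] [MeasurableSpace Y] [BorelSpace Y]
    (μ : Measure X) [IsProbabilityMeasure μ]
    (ψ : ℕ → X → Y) (hψ : ∀ k, Measurable (ψ k))
    (W : ℕ → Set X) (nseq : ℕ → ℕ → X → ℕ) (δ : ℕ → ℝ)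
    (hδlt : ∀ k, δ k < 1 / 4)
    (hδ0 : Tendsto δ atTop (nhds 0))
    (hwb : ∀ k, WellBehaved ψ (W k) (nseq k) (δ k)) :
    ∀ ε > (0 : ℝ), ∃ (K : Set X) (m : ℕ → X → ℕ),
      K ⊆ ⋂ k, W k ∧
      (μ (⋂ k, W k)).toReal - ε < (μ K).toReal ∧
      WellBehaved ψ K m 0 :=
  gluing_well_behaved_general μ ψ W nseq δ hδlt hδ0 hwb
end

section
/- Let ε ∈ (0, 1/400) and R > 10. Let I be a countable index set, (O_i)_{i∈I} a family of pairwise disjoint nonempty convex subsets (intervals) of [0, R], and (l_i)_{i∈I} positive real numbers with l_i ≥ λ(O_i) for every i ∈ I and ∑_{i∈I} l_i < 20·ε·R, where λ denotes Lebesgue measure. Then there exist a countable family (Q_j)_{j∈J} of pairwise disjoint open intervals of ℝ and a function f : I → J such that: (1) O_i ⊆ Q_{f(i)} for every i ∈ I; (2) λ(Q_j) = ∑_{i : f(i) = j} l_i/√ε for every j ∈ J. -/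
/-!
Riesz's rising sun lemma. Since `m i = l i / √ε` exceeds `l i`, the closed hull `[a i, b i]` of
`O i` can be enlarged to `[α i, β i]` still shorter than `m i`. Let `S = ∑ i, m i • ramp i` climb
by `m i` linearly across `[α i, β i]`; then `F x = x - S x` is continuous and strictly decreasing
on every `[α i, β i]`, so these intervals lie in the bounded open shadow set
`{x | ∃ y > x, F y < F x}`. On a component `(c, d)` of the shadow `F c = F d`, i.e.
`d - c = S d - S c`, and as each `[α i, β i]` lies inside one component, `S d - S c` is exactly the
total weight of the intervals inside `(c, d)`. These components are the `Q j`.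
-/

open MeasureTheory Set

noncomputable def ramp (a b x : ℝ) : ℝ := max 0 (min 1 ((x - a) / (b - a)))

section Ramp

variable {a b x : ℝ}

lemma continuous_ramp (a b : ℝ) : Continuous (ramp a b) := by
  unfold ramp; fun_prop

lemma ramp_nonneg (a b x : ℝ) : 0 ≤ ramp a b x := le_max_left _ _

lemma ramp_le_one (a b x : ℝ) : ramp a b x ≤ 1 := max_le zero_le_one (min_le_left _ _)

lemma monotone_ramp (hab : a ≤ b) : Monotone (ramp a b) := fun x y hxy => by
  unfold ramp
  gcongr

lemma ramp_of_le (hab : a ≤ b) (hx : x ≤ a) : ramp a b x = 0 :=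
  max_eq_left <| (min_le_right _ _).trans <|
    div_nonpos_of_nonpos_of_nonneg (by linarith) (by linarith)

lemma ramp_of_ge (hab : a < b) (hx : b ≤ x) : ramp a b x = 1 := by
  have : 1 ≤ (x - a) / (b - a) := (one_le_div (by linarith)).2 (by linarith)
  simp [ramp, min_eq_left this]

lemma ramp_of_mem_Icc (hab : a < b) (hx : x ∈ Icc a b) : ramp a b x = (x - a) / (b - a) := by
  have h0 : 0 ≤ (x - a) / (b - a) := div_nonneg (by linarith [hx.1]) (by linarith)
  have h1 : (x - a) / (b - a) ≤ 1 := (div_le_one (by linarith)).2 (by linarith [hx.2])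
  simp [ramp, min_eq_right h1, max_eq_right h0]

end Ramp

noncomputable def rampSum {I : Type*} (m α β : I → ℝ) (x : ℝ) : ℝ :=
  ∑' k, m k * ramp (α k) (β k) x

section RampSum

variable {I : Type*} {m α β : I → ℝ}

lemma abs_mul_ramp_le (hm0 : ∀ k, 0 ≤ m k) (k : I) (x : ℝ) :
    |m k * ramp (α k) (β k) x| ≤ m k := by
  rw [abs_of_nonneg (mul_nonneg (hm0 k) (ramp_nonneg ..))]
  exact mul_le_of_le_one_right (hm0 k) (ramp_le_one ..)

lemma summable_mul_ramp (hm : Summable m) (hm0 : ∀ k, 0 ≤ m k) (x : ℝ) :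
    Summable fun k => m k * ramp (α k) (β k) x :=
  hm.of_norm_bounded (abs_mul_ramp_le hm0 · x)

lemma continuous_rampSum (hm : Summable m) (hm0 : ∀ k, 0 ≤ m k) : Continuous (rampSum m α β) :=
  continuous_tsum (fun _ => (continuous_ramp _ _).const_mul _) hm (abs_mul_ramp_le hm0)

lemma rampSum_le_tsum (hm : Summable m) (hm0 : ∀ k, 0 ≤ m k) (x : ℝ) :
    rampSum m α β x ≤ ∑' k, m k :=
  (summable_mul_ramp hm hm0 x).tsum_le_tsum
    (fun k => (le_abs_self _).trans (abs_mul_ramp_le hm0 k x)) hm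

lemma rampSum_sub_rampSum (hm : Summable m) (hm0 : ∀ k, 0 ≤ m k) (x y : ℝ) :
    rampSum m α β y - rampSum m α β x = ∑' k, m k * (ramp (α k) (β k) y - ramp (α k) (β k) x) := by
  simp only [rampSum, mul_sub]
  exact ((summable_mul_ramp hm hm0 y).tsum_sub (summable_mul_ramp hm hm0 x)).symm

lemma mul_ramp_sub_le_rampSum_sub (hm : Summable m) (hm0 : ∀ k, 0 ≤ m k) (hαβ : ∀ k, α k ≤ β k)
    {x y : ℝ} (hxy : x ≤ y) (k : I) :
    m k * (ramp (α k) (β k) y - ramp (α k) (β k) x) ≤ rampSum m α β y - rampSum m α β x := by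
  rw [rampSum_sub_rampSum hm hm0]
  refine Summable.le_tsum ?_ k fun j _ =>
    mul_nonneg (hm0 j) (sub_nonneg.2 (monotone_ramp (hαβ j) hxy))
  simpa only [mul_sub] using (summable_mul_ramp hm hm0 y).sub (summable_mul_ramp hm hm0 x)

lemma rampSum_of_le {A x : ℝ} (hαβ : ∀ k, α k ≤ β k) (hA : ∀ k, A ≤ α k) (hx : x ≤ A) :
    rampSum m α β x = 0 := by
  simp [rampSum, ramp_of_le (hαβ _) (hx.trans (hA _))]

lemma rampSum_of_ge {B x : ℝ} (hαβ : ∀ k, α k < β k) (hB : ∀ k, β k ≤ B) (hx : B ≤ x) :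
    rampSum m α β x = ∑' k, m k := by
  simp [rampSum, ramp_of_ge (hαβ _) ((hB _).trans hx)]

end RampSum

def shadow (F : ℝ → ℝ) : Set ℝ := {x | ∃ y, x < y ∧ F y < F x}

lemma isOpen_shadow {F : ℝ → ℝ} (hF : Continuous F) : IsOpen (shadow F) := by
  have : shadow F = ⋃ y, Iio y ∩ F ⁻¹' Ioi (F y) := by ext; simp [shadow]
  rw [this]
  exact isOpen_iUnion fun y => isOpen_Iio.inter (isOpen_Ioi.preimage hF)

lemma le_of_notMem_shadow {F : ℝ → ℝ} {x y : ℝ} (hx : x ∉ shadow F) (hxy : x < y) : F x ≤ F y :=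
  not_lt.1 fun h => hx ⟨y, hxy, h⟩

def IsComponentIoo (E : Set ℝ) (c d : ℝ) : Prop := c < d ∧ c ∉ E ∧ d ∉ E ∧ Ioo c d ⊆ E

namespace IsComponentIoo

variable {E : Set ℝ} {a b c d c' d' : ℝ}

lemma le_or_le_or_subset (h : IsComponentIoo E c d) (hab : Ioo a b ⊆ E) :
    b ≤ c ∨ d ≤ a ∨ (c ≤ a ∧ b ≤ d) := by
  obtain ⟨-, hc, hd, -⟩ := h
  rcases le_or_gt b c with hbc | hcb
  · exact .inl hbc
  rcases le_or_gt d a with hda | had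
  · exact .inr (.inl hda)
  exact .inr (.inr ⟨not_lt.1 fun hac => hc (hab ⟨hac, hcb⟩),
    not_lt.1 fun hdb => hd (hab ⟨had, hdb⟩)⟩)

lemma eq_of_mem (h : IsComponentIoo E c d) (h' : IsComponentIoo E c' d') {z : ℝ}
    (hz : z ∈ Ioo c d) (hz' : z ∈ Ioo c' d') : c = c' ∧ d = d' := by
  have le₁ := h.le_or_le_or_subset h'.2.2.2
  have le₂ := h'.le_or_le_or_subset h.2.2.2
  constructor <;> grind

/-- Riesz's rising sun lemma. -/
lemma eq_of_shadow {F : ℝ → ℝ} (hF : Continuous F) (h : IsComponentIoo (shadow F) c d) :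
    F c = F d := by
  obtain ⟨hcd, hc, hd, hsub⟩ := h
  -- A minimum of `F` on `[z, d]` cannot sit before `d`: there `F` later drops lower still.
  have hdz : ∀ z ∈ Ioo c d, F d ≤ F z := by
    intro z hz
    obtain ⟨u, hu, hmin⟩ := isCompact_Icc.exists_isMinOn (nonempty_Icc.2 hz.2.le) hF.continuousOn
    obtain rfl | hud := eq_or_lt_of_le hu.2
    · exact hmin ⟨le_rfl, hz.2.le⟩
    obtain ⟨y, huy, hy⟩ := hsub ⟨hz.1.trans_le hu.1, hud⟩
    rcases le_or_gt y d with hyd | hdy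
    · exact absurd (hmin ⟨hu.1.trans huy.le, hyd⟩) (not_le.2 hy)
    · exact absurd (hmin ⟨hz.2.le, le_rfl⟩) (not_le.2 ((le_of_notMem_shadow hd hdy).trans_lt hy))
  have hdc : F d ≤ F c := by
    have : Icc c d ⊆ F ⁻¹' Ici (F d) := by
      rw [← closure_Ioo hcd.ne]
      exact closure_minimal hdz (isClosed_Ici.preimage hF)
    exact this ⟨le_rfl, hcd.le⟩
  exact le_antisymm (le_of_notMem_shadow hc hcd) hdc

end IsComponentIoo

lemma IsOpen.exists_isComponentIoo {E : Set ℝ} (hE : IsOpen E) {p x y : ℝ} (hp : p ∈ E)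
    (hx : x ∉ E) (hxp : x < p) (hy : y ∉ E) (hpy : p < y) :
    ∃ c d, IsComponentIoo E c d ∧ p ∈ Ioo c d := by
  set L := Eᶜ ∩ Iic p
  set U := Eᶜ ∩ Ici p
  have hLb : BddAbove L := ⟨p, fun _ hz => hz.2⟩
  have hUb : BddBelow U := ⟨p, fun _ hz => hz.2⟩
  have hL : sSup L ∈ L := (hE.isClosed_compl.inter isClosed_Iic).csSup_mem ⟨x, hx, hxp.le⟩ hLb
  have hU : sInf U ∈ U := (hE.isClosed_compl.inter isClosed_Ici).csInf_mem ⟨y, hy, hpy.le⟩ hUb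
  have hcp : sSup L < p := hL.2.lt_of_ne fun h => hL.1 (h ▸ hp)
  have hpd : p < sInf U := hU.2.lt_of_ne' fun h => hU.1 (h ▸ hp)
  refine ⟨sSup L, sInf U, ⟨hcp.trans hpd, hL.1, hU.1, fun z hz => ?_⟩, hcp, hpd⟩
  by_contra hzE
  rcases le_total z p with hzp | hpz
  · exact (le_csSup hLb ⟨hzE, hzp⟩).not_gt hz.1
  · exact (csInf_le hUb ⟨hzE, hpz⟩).not_gt hz.2

section Covering

variable {I : Type*} {m α β : I → ℝ}

lemma strictAntiOn_sub_rampSum (hm : Summable m) (hαβ : ∀ k, α k < β k)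
    (hlt : ∀ k, β k - α k < m k) (k : I) :
    StrictAntiOn (fun x => x - rampSum m α β x) (Icc (α k) (β k)) := by
  intro u hu v hv huv
  have hm0 : ∀ k, 0 ≤ m k := fun k => by linarith [hαβ k, hlt k]
  have hw : 0 < β k - α k := sub_pos.2 (hαβ k)
  have key := mul_ramp_sub_le_rampSum_sub hm hm0 (fun k => (hαβ k).le) huv.le k
  rw [ramp_of_mem_Icc (hαβ k) hv, ramp_of_mem_Icc (hαβ k) hu, ← sub_div,
    sub_sub_sub_cancel_right, mul_div_assoc', div_le_iff₀ hw] at key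
  dsimp only
  nlinarith [hlt k]

lemma Ico_subset_shadow_sub_rampSum (hm : Summable m) (hαβ : ∀ k, α k < β k)
    (hlt : ∀ k, β k - α k < m k) (k : I) :
    Ico (α k) (β k) ⊆ shadow fun x => x - rampSum m α β x := fun _ hz =>
  ⟨β k, hz.2, strictAntiOn_sub_rampSum hm hαβ hlt k ⟨hz.1, hz.2.le⟩ ⟨(hαβ k).le, le_rfl⟩ hz.2⟩

lemma shadow_sub_rampSum_subset_Ioo (hm : Summable m) (hm0 : ∀ k, 0 ≤ m k) (hαβ : ∀ k, α k < β k)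
    {A B : ℝ} (hA : ∀ k, A ≤ α k) (hB : ∀ k, β k ≤ B) :
    shadow (fun x => x - rampSum m α β x) ⊆ Ioo (A - ∑' k, m k) B := by
  have hT : 0 ≤ ∑' k, m k := tsum_nonneg hm0
  have hle : ∀ {x}, x ≤ A → rampSum m α β x = 0 := rampSum_of_le (fun k => (hαβ k).le) hA
  have hge : ∀ {x}, B ≤ x → rampSum m α β x = ∑' k, m k := rampSum_of_ge hαβ hB
  rintro x ⟨y, hxy, hFy⟩
  dsimp only at hFy
  constructor
  · by_contra! hx
    rw [hle (x := x) (by linarith)] at hFy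
    rcases le_or_gt y A with hy | hy
    · rw [hle hy] at hFy
      linarith
    · linarith [rampSum_le_tsum (α := α) (β := β) hm hm0 y]
  · by_contra! hx
    rw [hge hx, hge (hx.trans hxy.le)] at hFy
    linarith

lemma rampSum_sub_eq_tsum_subtype (hm : Summable m) (hm0 : ∀ k, 0 ≤ m k)
    (hαβ : ∀ k, α k < β k) {c d : ℝ} (hcd : c ≤ d)
    (hsep : ∀ k, β k ≤ c ∨ d ≤ α k ∨ (c ≤ α k ∧ β k ≤ d)) :
    rampSum m α β d - rampSum m α β c = ∑' k : {k // c ≤ α k ∧ β k ≤ d}, m k := by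
  rw [rampSum_sub_rampSum hm hm0]
  refine (tsum_congr fun k => ?_).trans (tsum_subtype {k | c ≤ α k ∧ β k ≤ d} m).symm
  have hk := hαβ k
  rcases hsep k with h | h | h
  · rw [ramp_of_ge hk (h.trans hcd), ramp_of_ge hk h, indicator_of_notMem (by grind)]
    ring
  · rw [ramp_of_le hk.le h, ramp_of_le hk.le (hcd.trans h), indicator_of_notMem (by grind)]
    ring
  · rw [ramp_of_ge hk h.2, ramp_of_le hk.le h.1,
      indicator_of_mem (show k ∈ {k | c ≤ α k ∧ β k ≤ d} from h)]
    ring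

theorem exists_Ioo_cover_length_eq_tsum (hm : Summable m) (hαβ : ∀ i, α i < β i)
    (hlt : ∀ i, β i - α i < m i) {A B : ℝ} (hA : ∀ i, A ≤ α i) (hB : ∀ i, β i ≤ B) :
    ∃ g : I → ℝ × ℝ, (∀ i, (g i).1 ≤ α i ∧ β i ≤ (g i).2) ∧
      (∀ i k, g i ≠ g k → Disjoint (Ioo (g i).1 (g i).2) (Ioo (g k).1 (g k).2)) ∧
      ∀ i, (g i).2 - (g i).1 = ∑' k : {k // g k = g i}, m k := by
  have hm0 : ∀ k, 0 ≤ m k := fun k => by linarith [hαβ k, hlt k]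
  set F : ℝ → ℝ := fun x => x - rampSum m α β x
  have hF : Continuous F := continuous_id.sub (continuous_rampSum hm hm0)
  have hIco := Ico_subset_shadow_sub_rampSum hm hαβ hlt
  have hαE : ∀ k, α k ∈ shadow F := fun k => hIco k ⟨le_rfl, hαβ k⟩
  have hbdd := shadow_sub_rampSum_subset_Ioo hm hm0 hαβ hA hB
  have hcomp : ∀ i, ∃ cd : ℝ × ℝ, IsComponentIoo (shadow F) cd.1 cd.2 ∧ α i ∈ Ioo cd.1 cd.2 := by
    intro i
    obtain ⟨c, d, h⟩ := (isOpen_shadow hF).exists_isComponentIoo (hαE i)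
      (fun h => (hbdd h).1.false) (hbdd (hαE i)).1 (fun h => (hbdd h).2.false) (hbdd (hαE i)).2
    exact ⟨(c, d), h⟩
  choose g hg hαg using hcomp
  have hsep : ∀ i k, β k ≤ (g i).1 ∨ (g i).2 ≤ α k ∨ ((g i).1 ≤ α k ∧ β k ≤ (g i).2) :=
    fun i k => (hg i).le_or_le_or_subset (Ioo_subset_Ico_self.trans (hIco k))
  have hcover : ∀ i, (g i).1 ≤ α i ∧ β i ≤ (g i).2 := by
    intro i
    have := hαg i
    have := hαβ i
    grind [hsep i i]
  have hiff : ∀ i k, ((g i).1 ≤ α k ∧ β k ≤ (g i).2) ↔ g k = g i := by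
    refine fun i k => ⟨fun h => ?_, fun h => h ▸ hcover k⟩
    have hα : α k ∈ Ioo (g i).1 (g i).2 :=
      ⟨h.1.lt_of_ne fun e => (hg i).2.1 (e ▸ hαE k), (hαβ k).trans_le h.2⟩
    obtain ⟨h₁, h₂⟩ := (hg k).eq_of_mem (hg i) (hαg k) hα
    exact Prod.ext h₁ h₂
  refine ⟨g, hcover, fun i k hne => disjoint_left.2 fun z hz hz' => hne ?_, fun i => ?_⟩
  · obtain ⟨h₁, h₂⟩ := (hg i).eq_of_mem (hg k) hz hz'
    exact Prod.ext h₁ h₂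
  have hFcd := (hg i).eq_of_shadow hF
  calc (g i).2 - (g i).1 = rampSum m α β (g i).2 - rampSum m α β (g i).1 := by
        simp only [F] at hFcd; linarith
    _ = ∑' k : {k // (g i).1 ≤ α k ∧ β k ≤ (g i).2}, m k :=
        rampSum_sub_eq_tsum_subtype hm hm0 hαβ (hg i).1.le (hsep i)
    _ = ∑' k : {k // g k = g i}, m k := (Equiv.subtypeEquivRight (hiff i)).tsum_eq fun k => m k

theorem exists_Ioo_cover_Icc_length_eq_tsum {a b : I → ℝ} (hm : Summable m) (hab : ∀ i, a i ≤ b i)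
    (hlt : ∀ i, b i - a i < m i) {A B : ℝ} (hA : ∀ i, A ≤ a i) (hB : ∀ i, b i ≤ B) :
    ∃ g : I → ℝ × ℝ, (∀ i, Icc (a i) (b i) ⊆ Ioo (g i).1 (g i).2) ∧
      (∀ i k, g i ≠ g k → Disjoint (Ioo (g i).1 (g i).2) (Ioo (g k).1 (g k).2)) ∧
      ∀ i, (g i).2 - (g i).1 = ∑' k : {k // g k = g i}, m k := by
  set δ : I → ℝ := fun i => (m i - (b i - a i)) / 4
  have hδ : ∀ i, 0 < δ i := fun i => by simp only [δ]; linarith [hlt i]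
  have hδT : ∀ i, δ i ≤ ∑' k, m k := fun i =>
    (show δ i ≤ m i by simp only [δ]; linarith [hlt i, hab i]).trans <|
      hm.le_tsum i fun k _ => by linarith [hlt k, hab k]
  obtain ⟨g, hcov, hdisj, hlen⟩ := exists_Ioo_cover_length_eq_tsum (α := fun i => a i - δ i)
    (β := fun i => b i + δ i) (A := A - ∑' k, m k) (B := B + ∑' k, m k) hm
    (fun i => by linarith [hab i, hδ i]) (fun i => by simp only [δ]; linarith [hlt i])
    (fun i => by linarith [hA i, hδT i]) (fun i => by linarith [hB i, hδT i])
  exact ⟨g, fun i => Icc_subset_Ioo (by linarith [(hcov i).1, hδ i])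
    (by linarith [(hcov i).2, hδ i]), hdisj, hlen⟩

theorem exists_disjoint_Ioo_family_cover_Icc [Countable I] {a b : I → ℝ} (hm : Summable m)
    (hab : ∀ i, a i ≤ b i) (hlt : ∀ i, b i - a i < m i) {A B : ℝ} (hA : ∀ i, A ≤ a i)
    (hB : ∀ i, b i ≤ B) :
    ∃ (J : Type) (Q : J → Set ℝ) (f : I → J), Countable J ∧
      (∀ j, ∃ c d : ℝ, c < d ∧ Q j = Ioo c d) ∧
      (∀ j j', j ≠ j' → Disjoint (Q j) (Q j')) ∧
      (∀ i, Icc (a i) (b i) ⊆ Q (f i)) ∧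
      ∀ j, volume (Q j) = ∑' i : {i // f i = j}, ENNReal.ofReal (m i) := by
  obtain ⟨g, hcov, hdisj, hlen⟩ := exists_Ioo_cover_Icc_length_eq_tsum hm hab hlt hA hB
  refine ⟨range g, fun j => Ioo j.1.1 j.1.2, rangeFactorization g, (countable_range g).to_subtype,
    ?_, ?_, hcov, ?_⟩
  · rintro ⟨_, i, rfl⟩
    exact ⟨_, _, nonempty_Ioo.1 ((nonempty_Icc.2 (hab i)).mono (hcov i)), rfl⟩
  · rintro ⟨_, i, rfl⟩ ⟨_, k, rfl⟩ hne
    exact hdisj i k fun h => hne (Subtype.ext h)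
  · rintro ⟨_, i, rfl⟩
    have hsub : Summable fun k : {k // g k = g i} => m k := hm.subtype {k | g k = g i}
    rw [Real.volume_Ioo, hlen i,
      ENNReal.ofReal_tsum_of_nonneg (fun k => by linarith [hab k.1, hlt k.1]) hsub]
    exact ((Equiv.subtypeEquivRight fun _ => Subtype.ext_iff :
      {k // rangeFactorization g k = ⟨g i, mem_range_self i⟩} ≃ {k // g k = g i}).tsum_eq
        fun k => ENNReal.ofReal (m k)).symm

end Covering

lemma IsConnected.ofReal_csSup_sub_csInf_le_volume {s : Set ℝ} (hs : IsConnected s)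
    (hb : BddBelow s) (ha : BddAbove s) : ENNReal.ofReal (sSup s - sInf s) ≤ volume s :=
  Real.volume_Ioo ▸ measure_mono (hs.Ioo_csInf_csSup_subset hb ha)

theorem interval_covering_lemma_general
    (ε R : ℝ) (hε : ε ∈ Set.Ioo (0 : ℝ) (1 / 400))
    (I : Type*) [Countable I]
    (O : I → Set ℝ) (l : I → ℝ)
    (hO_ne : ∀ i, (O i).Nonempty)
    (hO_conv : ∀ i, Convex ℝ (O i))
    (hO_sub : ∀ i, O i ⊆ Icc (0 : ℝ) R)
    (hl_pos : ∀ i, 0 < l i)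
    (hl_ge : ∀ i, volume (O i) ≤ ENNReal.ofReal (l i))
    (hsum : ∑' i, ENNReal.ofReal (l i) < ENNReal.ofReal (20 * ε * R)) :
    ∃ (J : Type) (Q : J → Set ℝ) (f : I → J),
      Countable J ∧
      (∀ j, ∃ a b : ℝ, a < b ∧ Q j = Ioo a b) ∧
      (∀ j j', j ≠ j' → Disjoint (Q j) (Q j')) ∧
      (∀ i, O i ⊆ Q (f i)) ∧
      (∀ j, volume (Q j)
        = ∑' i : {i : I // f i = j}, ENNReal.ofReal (l i.1 / Real.sqrt ε)) := by
  have hsqrt : Real.sqrt ε < 1 := (Real.sqrt_lt' one_pos).2 (by linarith [hε.2])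
  have hl : Summable l := (ENNReal.summable_toReal (hsum.trans ENNReal.ofReal_lt_top).ne).congr
    fun i => ENNReal.toReal_ofReal (hl_pos i).le
  have hbdd : ∀ i, BddBelow (O i) ∧ BddAbove (O i) := fun i =>
    ⟨bddBelow_Icc.mono (hO_sub i), bddAbove_Icc.mono (hO_sub i)⟩
  have hlen : ∀ i, sSup (O i) - sInf (O i) < l i / Real.sqrt ε := by
    intro i
    have hvol := (((hO_conv i).isConnected (hO_ne i)).ofReal_csSup_sub_csInf_le_volume
      (hbdd i).1 (hbdd i).2).trans (hl_ge i)
    rw [ENNReal.ofReal_le_ofReal_iff (hl_pos i).le] at hvol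
    exact hvol.trans_lt <|
      (lt_div_iff₀ (Real.sqrt_pos.2 hε.1)).2 (mul_lt_of_lt_one_right (hl_pos i) hsqrt)
  obtain ⟨J, Q, f, hJ, hQ, hdisj, hcov, hvol⟩ := exists_disjoint_Ioo_family_cover_Icc
    (hl.div_const _) (fun i => csInf_le_csSup (hO_ne i) (hbdd i).1 (hbdd i).2) hlen
    (fun i => le_csInf (hO_ne i) fun x hx => (hO_sub i hx).1)
    (fun i => csSup_le (hO_ne i) fun x hx => (hO_sub i hx).2)
  exact ⟨J, Q, f, hJ, hQ, hdisj,
    fun i => (subset_Icc_csInf_csSup (hbdd i).1 (hbdd i).2).trans (hcov i), hvol⟩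

/-- Covering lemma (Appendix A, Lemma A.1): a countable family of disjoint small
intervals in `[0, R]` with weights `l i ≥ λ(O i)` of total weight `< 20 ε R` can be
absorbed into pairwise disjoint open intervals `Q j`, the interval `Q j` having length
exactly `∑_{f i = j} l i / √ε`. -/
theorem interval_covering_lemma
    (ε R : ℝ) (hε : ε ∈ Set.Ioo (0 : ℝ) (1 / 400)) (hR : 10 < R)
    (I : Type*) [Countable I]
    (O : I → Set ℝ) (l : I → ℝ)
    (hO_ne : ∀ i, (O i).Nonempty)
    (hO_conv : ∀ i, Convex ℝ (O i))
    (hO_sub : ∀ i, O i ⊆ Icc (0 : ℝ) R)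
    (hO_disj : ∀ i j, i ≠ j → Disjoint (O i) (O j))
    (hl_pos : ∀ i, 0 < l i)
    (hl_ge : ∀ i, volume (O i) ≤ ENNReal.ofReal (l i))
    (hsum : ∑' i, ENNReal.ofReal (l i) < ENNReal.ofReal (20 * ε * R)) :
    ∃ (J : Type) (Q : J → Set ℝ) (f : I → J),
      Countable J ∧
      (∀ j, ∃ a b : ℝ, a < b ∧ Q j = Ioo a b) ∧
      (∀ j j', j ≠ j' → Disjoint (Q j) (Q j')) ∧
      (∀ i, O i ⊆ Q (f i)) ∧
      (∀ j, volume (Q j)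
        = ∑' i : {i : I // f i = j}, ENNReal.ofReal (l i.1 / Real.sqrt ε)) :=
  interval_covering_lemma_general ε R hε I O l hO_ne hO_conv hO_sub hl_pos hl_ge hsum
end

section
/- For every ε ∈ (0, 10⁻³) and all real numbers τ, σ with τ ≥ 10 and |τ/σ − 1| < 0.02·ε, there exists an infinitely differentiable function g : ℝ → ℝ such that g(0) = 0, g(τ) = σ, g′(0) = g′(τ) = 1, and |g′(t) − 1| < 0.3·ε for all t ∈ [0, τ]. -/
/-- Smooth reparametrization (Appendix B, properties (I)–(III) of `g_z`): given
`ε ∈ (0, 10⁻³)`, `τ ≥ 10` and `|τ/σ − 1| < 0.02 ε`, there is a `C^∞` function `g` with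
`g 0 = 0`, `g τ = σ`, unit derivative at the endpoints, and derivative within `0.3 ε`
of `1` on `[0, τ]`. -/
theorem smooth_reparametrization
    (ε τ σ : ℝ) (hε : ε ∈ Set.Ioo (0 : ℝ) (1 / 1000)) (hτ : 10 ≤ τ)
    (hratio : |τ / σ - 1| < 0.02 * ε) :
    ∃ g : ℝ → ℝ, ContDiff ℝ (⊤ : ℕ∞) g ∧
      g 0 = 0 ∧ g τ = σ ∧ deriv g 0 = 1 ∧ deriv g τ = 1 ∧
      ∀ t ∈ Set.Icc (0 : ℝ) τ, |deriv g t - 1| < 0.3 * ε := by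
  obtain ⟨hε0, hε1⟩ := hε
  have hτ0 : (0:ℝ) < τ := by linarith
  have hτne : τ ≠ 0 := ne_of_gt hτ0
  have hσne : σ ≠ 0 := by
    intro h
    rw [h, div_zero] at hratio
    have h1 : |(0:ℝ) - 1| = 1 := by norm_num
    rw [h1] at hratio
    nlinarith
  have hσ0 : 0 < σ := by
    by_contra h
    push_neg at h
    have hσneg : σ < 0 := lt_of_le_of_ne h hσne
    have hdivneg : τ / σ < 0 := div_neg_of_pos_of_neg hτ0 hσneg
    have h1 : 1 < |τ / σ - 1| := by
      rw [abs_of_nonpos (by linarith)]; linarith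
    nlinarith
  set c : ℝ := σ - τ with hc
  have hA : (τ / σ - 1) * σ = τ - σ := by field_simp
  have habs := abs_lt.mp hratio
  have hcb : |c| < 0.02 * ε * σ := by
    rw [abs_lt]
    constructor
    · nlinarith [mul_lt_mul_of_pos_right habs.2 hσ0]
    · nlinarith [mul_lt_mul_of_pos_right habs.1 hσ0]
  have hσlt : σ < 2 * τ := by
    have := abs_lt.mp hcb
    nlinarith
  have hcτ : |c| < 0.04 * ε * τ := by nlinarith
  have hD : ∀ t : ℝ, HasDerivAt (fun t => t + c * (3 * t ^ 2 / τ ^ 2 - 2 * t ^ 3 / τ ^ 3))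
      (1 + c * (6 * t / τ ^ 2 - 6 * t ^ 2 / τ ^ 3)) t := by
    intro t
    have h1 : HasDerivAt (fun t : ℝ => t + c * (3 * t ^ 2 / τ ^ 2 - 2 * t ^ 3 / τ ^ 3))
        (1 + c * ((3 * (2 * t ^ 1)) / τ ^ 2 - (2 * (3 * t ^ 2)) / τ ^ 3)) t :=
      (hasDerivAt_id t).add
        (HasDerivAt.const_mul c
          ((HasDerivAt.const_mul 3 (hasDerivAt_pow 2 t)).div_const (τ ^ 2) |>.sub
            ((HasDerivAt.const_mul 2 (hasDerivAt_pow 3 t)).div_const (τ ^ 3))))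
    convert h1 using 1; ring
  refine ⟨fun t => t + c * (3 * t ^ 2 / τ ^ 2 - 2 * t ^ 3 / τ ^ 3), ?_, ?_, ?_, ?_, ?_, ?_⟩
  · exact contDiff_id.add
      (contDiff_const.mul
        (((contDiff_const.mul (contDiff_id.pow 2)).div_const _).sub
          ((contDiff_const.mul (contDiff_id.pow 3)).div_const _)))
  · simp
  · field_simp
    rw [hc]; ring
  · rw [(hD 0).deriv]; simp
  · rw [(hD τ).deriv]; field_simp; ring
  · intro t ht
    obtain ⟨ht0, htτ⟩ := ht
    rw [(hD t).deriv]
    have heq : 6 * t / τ ^ 2 - 6 * t ^ 2 / τ ^ 3 = 6 * t * (τ - t) / τ ^ 3 := by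
      field_simp
    have h2 : |6 * t / τ ^ 2 - 6 * t ^ 2 / τ ^ 3| ≤ 3 / (2 * τ) := by
      rw [heq, abs_le]
      constructor
      · have h3 : (0:ℝ) ≤ 6 * t * (τ - t) / τ ^ 3 := by
          apply div_nonneg (by nlinarith) (by positivity)
        have h4 : (0:ℝ) ≤ 3 / (2 * τ) := by positivity
        linarith
      · rw [div_le_div_iff₀ (by positivity) (by positivity)]
        nlinarith [sq_nonneg (t - τ / 2)]
    have key : |c * (6 * t / τ ^ 2 - 6 * t ^ 2 / τ ^ 3)| < 0.3 * ε := by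
      rw [abs_mul]
      calc |c| * |6 * t / τ ^ 2 - 6 * t ^ 2 / τ ^ 3| ≤ |c| * (3 / (2 * τ)) :=
            mul_le_mul_of_nonneg_left h2 (abs_nonneg c)
        _ < (0.04 * ε * τ) * (3 / (2 * τ)) := by
            apply mul_lt_mul_of_pos_right hcτ; positivity
        _ = 0.06 * ε := by field_simp; ring
        _ < 0.3 * ε := by nlinarith
    have : (1:ℝ) + c * (6 * t / τ ^ 2 - 6 * t ^ 2 / τ ^ 3) - 1
        = c * (6 * t / τ ^ 2 - 6 * t ^ 2 / τ ^ 3) := by ring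
    rw [this]
    exact key
end

section
/- Let H be a complex Hilbert space and (f_n)_{n∈ℤ} a pairwise orthogonal family in H which is summable with sum f. For θ ∈ ℝ let g(θ) denote the sum of the (summable) family (e^{2πinθ}·f_n)_{n∈ℤ}. Suppose there are C ≥ 0 and s ∈ (0, 1] such that ‖g(θ) − f‖ ≤ C·θ^s for all θ ∈ (0, 1]. Then for every s′ ∈ (0, s): ∑_{n∈ℤ} |n|^{2s′}·‖f_n‖² ≤ C²/(2(s − s′)). -/
/-!
By Parseval, `‖g θ - F‖² = ∑ₙ (2 - 2 cos 2πnθ) ‖fₙ‖²`, so the Hölder bound gives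
`∑ₙ (2 - 2 cos 2πnθ) ‖fₙ‖² ≤ C² θ^{2s}` on `(0, 1]`. Multiply by `θ^{-1-2s'}` and integrate over
`(0, 1]`: the right side integrates to `C² / (2(s - s'))`, while for `n ≠ 0` the weighted integral of
`2 - 2 cos 2πnθ` is at least `|n|^{2s'}`, as one sees by restricting to `(1/(4|n|), 1/(2|n|)]`,
where the cosine is nonpositive. In `ℝ≥0∞` the sum and the integral commute with no integrability
side conditions.
-/

open MeasureTheory Set Real

section Orthogonal

variable {𝕜 E ι : Type*} [RCLike 𝕜] [NormedAddCommGroup E] [InnerProductSpace 𝕜 E] {u : ι → E}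

theorem norm_sum_sq_eq_sum_norm_sq_of_pairwise_inner_eq_zero
    (horth : Pairwise fun i j => inner 𝕜 (u i) (u j) = 0) (s : Finset ι) :
    ‖∑ i ∈ s, u i‖ ^ 2 = ∑ i ∈ s, ‖u i‖ ^ 2 := by
  classical
  induction s using Finset.induction_on with
  | empty => simp
  | insert i s hi ih =>
    have hperp : inner 𝕜 (u i) (∑ j ∈ s, u j) = 0 :=
      (inner_sum ..).trans <|
        Finset.sum_eq_zero fun j hj => horth (ne_of_mem_of_not_mem hj hi).symm
    rw [Finset.sum_insert hi, Finset.sum_insert hi, @norm_add_sq 𝕜, hperp, ih]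
    simp

theorem HasSum.norm_sq_of_pairwise_inner_eq_zero
    (horth : Pairwise fun i j => inner 𝕜 (u i) (u j) = 0) {v : E} (hv : HasSum u v) :
    HasSum (fun i => ‖u i‖ ^ 2) (‖v‖ ^ 2) := by
  have := ((continuous_norm.pow 2).tendsto v).comp hv
  unfold HasSum
  simpa [Function.comp_def, norm_sum_sq_eq_sum_norm_sq_of_pairwise_inner_eq_zero horth] using this

theorem HasSum.norm_smul_sq_of_pairwise_inner_eq_zero
    (horth : Pairwise fun i j => inner 𝕜 (u i) (u j) = 0) {a : ι → 𝕜} {v : E}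
    (hv : HasSum (fun i => a i • u i) v) :
    HasSum (fun i => ‖a i‖ ^ 2 * ‖u i‖ ^ 2) (‖v‖ ^ 2) := by
  have horth' : Pairwise fun i j => inner 𝕜 (a i • u i) (a j • u j) = 0 := fun i j hij => by
    simp [inner_smul_left, inner_smul_right, horth hij]
  simpa [norm_smul, mul_pow] using hv.norm_sq_of_pairwise_inner_eq_zero horth'

end Orthogonal

theorem Complex.norm_exp_ofReal_mul_I_sub_one_sq (x : ℝ) :
    ‖exp (x * I) - 1‖ ^ 2 = 2 - 2 * Real.cos x := by
  have h : exp (x * I) - 1 = ((Real.cos x - 1 : ℝ) : ℂ) + (Real.sin x : ℝ) * I := by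
    rw [Complex.exp_mul_I]
    push_cast
    ring
  rw [h, Complex.sq_norm, Complex.normSq_add_mul_I]
  nlinarith [Real.sin_sq_add_cos_sq x]

theorem HasSum.one_sub_cos_mul_norm_sq_of_pairwise_inner_eq_zero {H ι : Type*}
    [NormedAddCommGroup H] [InnerProductSpace ℂ H] {f : ι → H} {F G : H} {ω : ι → ℝ}
    (horth : Pairwise fun i j => inner ℂ (f i) (f j) = 0) (hF : HasSum f F)
    (hG : HasSum (fun i => Complex.exp (ω i * Complex.I) • f i) G) :
    HasSum (fun i => (2 - 2 * cos (ω i)) * ‖f i‖ ^ 2) (‖G - F‖ ^ 2) := by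
  have hdiff : HasSum (fun i => (Complex.exp (ω i * Complex.I) - 1) • f i) (G - F) := by
    simpa [sub_smul] using hG.sub hF
  simpa [Complex.norm_exp_ofReal_mul_I_sub_one_sq] using
    hdiff.norm_smul_sq_of_pairwise_inner_eq_zero horth

theorem lintegral_Ioc_zero_one_ofReal_rpow {r : ℝ} (hr : -1 < r) :
    ∫⁻ θ in Ioc 0 1, ENNReal.ofReal (θ ^ r) = ENNReal.ofReal (1 / (r + 1)) := by
  rw [← ofReal_integral_eq_lintegral_ofReal
      (intervalIntegral.intervalIntegrable_rpow' hr).1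
      ((ae_restrict_iff' measurableSet_Ioc).2 (.of_forall fun θ hθ => rpow_nonneg hθ.1.le r)),
    ← intervalIntegral.integral_of_le zero_le_one, integral_rpow (.inl hr)]
  simp [zero_rpow (by linarith : r + 1 ≠ 0)]

theorem ofReal_rpow_le_lintegral_rpow_mul_one_sub_cos {t x : ℝ} (ht : 0 ≤ t) (hx : 1 / 2 ≤ |x|) :
    ENNReal.ofReal (|x| ^ t) ≤
      ∫⁻ θ in Ioc 0 1, ENNReal.ofReal (θ ^ (-1 - t) * (2 - 2 * cos (2 * π * x * θ))) := by
  set b := (2 * |x|)⁻¹ with hb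
  have hx0 : 0 < |x| := by linarith
  have hb0 : 0 < b := by positivity
  have hb1 : b ≤ 1 := inv_le_one_of_one_le₀ (by linarith)
  have hxb : 2 * |x| * b = 1 := mul_inv_cancel₀ (by positivity)
  have hcos : ∀ θ ∈ Ioc (b / 2) b, cos (2 * π * x * θ) ≤ 0 := by
    rintro θ ⟨hθb, hθ⟩
    have hθ0 : 0 < θ := by linarith
    have habs : |2 * π * x * θ| = π * (2 * |x| * θ) := by
      rw [abs_mul, abs_mul, abs_mul, abs_two, abs_of_pos pi_pos, abs_of_pos hθ0]
      ring
    have hlow : 1 / 2 ≤ 2 * |x| * θ := by nlinarith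
    have hupp : 2 * |x| * θ ≤ 1 := hxb ▸ mul_le_mul_of_nonneg_left hθ (by positivity)
    rw [← cos_abs, habs]
    apply cos_nonpos_of_pi_div_two_le_of_le <;> nlinarith [pi_pos]
  have hpt : ∀ θ ∈ Ioc (b / 2) b,
      2 * b ^ (-1 - t) ≤ θ ^ (-1 - t) * (2 - 2 * cos (2 * π * x * θ)) := by
    intro θ hθ
    have hθ0 : 0 < θ := by linarith [hθ.1]
    have hmono : b ^ (-1 - t) ≤ θ ^ (-1 - t) := rpow_le_rpow_of_nonpos hθ0 hθ.2 (by linarith)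
    nlinarith [hcos θ hθ, rpow_nonneg hθ0.le (-1 - t)]
  have hmass : |x| ^ t ≤ 2 * b ^ (-1 - t) * (b - b / 2) :=
    calc |x| ^ t ≤ (2 * |x|) ^ t := rpow_le_rpow hx0.le (by linarith) ht
      _ = b ^ (-1 - t + 1) := by
        rw [hb, show -1 - t + 1 = -t by ring, rpow_neg (by positivity), inv_rpow (by positivity),
          inv_inv]
      _ = 2 * b ^ (-1 - t) * (b - b / 2) := by rw [rpow_add_one hb0.ne']; ring
  calc ENNReal.ofReal (|x| ^ t)
      ≤ ENNReal.ofReal (2 * b ^ (-1 - t)) * volume (Ioc (b / 2) b) := by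
        rw [Real.volume_Ioc, ← ENNReal.ofReal_mul (by positivity)]
        exact ENNReal.ofReal_le_ofReal hmass
    _ = ∫⁻ _ in Ioc (b / 2) b, ENNReal.ofReal (2 * b ^ (-1 - t)) := (setLIntegral_const _ _).symm
    _ ≤ ∫⁻ θ in Ioc (b / 2) b, ENNReal.ofReal (θ ^ (-1 - t) * (2 - 2 * cos (2 * π * x * θ))) :=
        setLIntegral_mono' measurableSet_Ioc fun θ hθ => ENNReal.ofReal_le_ofReal (hpt θ hθ)
    _ ≤ _ := lintegral_mono_set (Ioc_subset_Ioc (by positivity) hb1)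

theorem ofReal_abs_intCast_rpow_mul_le_lintegral {t c : ℝ} (ht : 0 < t) (hc : 0 ≤ c) (n : ℤ) :
    ENNReal.ofReal (|(n : ℝ)| ^ t * c) ≤
      ∫⁻ θ in Ioc 0 1, ENNReal.ofReal (θ ^ (-1 - t) * ((2 - 2 * cos (2 * π * n * θ)) * c)) := by
  rcases eq_or_ne n 0 with rfl | hn
  · simp [zero_rpow ht.ne']
  have hn_half : 1 / 2 ≤ |(n : ℝ)| := by
    have : (1 : ℝ) ≤ |(n : ℝ)| := by exact_mod_cast Int.one_le_abs hn
    linarith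
  simp_rw [← mul_assoc, ENNReal.ofReal_mul' hc]
  rw [lintegral_mul_const' _ _ ENNReal.ofReal_ne_top]
  gcongr
  exact ofReal_rpow_le_lintegral_rpow_mul_one_sub_cos ht.le hn_half

theorem tsum_ofReal_abs_rpow_mul_le_of_hasSum_one_sub_cos_mul {c : ℤ → ℝ} {S : ℝ → ℝ}
    {B r t : ℝ} (hB : 0 ≤ B) (ht : 0 < t) (htr : t < r) (hc : ∀ n, 0 ≤ c n)
    (hS : ∀ θ ∈ Ioc (0 : ℝ) 1, HasSum (fun n : ℤ => (2 - 2 * cos (2 * π * n * θ)) * c n) (S θ))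
    (hSle : ∀ θ ∈ Ioc (0 : ℝ) 1, S θ ≤ B * θ ^ r) :
    ∑' n : ℤ, ENNReal.ofReal (|(n : ℝ)| ^ t * c n) ≤ ENNReal.ofReal (B / (r - t)) := by
  have hweighted : ∀ θ ∈ Ioc (0 : ℝ) 1,
      ∑' n : ℤ, ENNReal.ofReal (θ ^ (-1 - t) * ((2 - 2 * cos (2 * π * n * θ)) * c n)) =
        ENNReal.ofReal (θ ^ (-1 - t) * S θ) := fun θ hθ => by
    have hnonneg (n : ℤ) : 0 ≤ θ ^ (-1 - t) * ((2 - 2 * cos (2 * π * n * θ)) * c n) :=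
      mul_nonneg (rpow_nonneg hθ.1.le _)
        (mul_nonneg (by linarith [cos_le_one (2 * π * n * θ)]) (hc n))
    rw [← ENNReal.ofReal_tsum_of_nonneg hnonneg ((hS θ hθ).mul_left _).summable,
      ((hS θ hθ).mul_left _).tsum_eq]
  have hweighted_le : ∀ θ ∈ Ioc (0 : ℝ) 1, θ ^ (-1 - t) * S θ ≤ B * θ ^ (r - t - 1) :=
    fun θ hθ =>
    calc θ ^ (-1 - t) * S θ ≤ θ ^ (-1 - t) * (B * θ ^ r) :=
          mul_le_mul_of_nonneg_left (hSle θ hθ) (rpow_nonneg hθ.1.le _)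
      _ = B * θ ^ (r - t - 1) := by
          rw [show r - t - 1 = -1 - t + r by ring, rpow_add hθ.1]
          ring
  calc ∑' n : ℤ, ENNReal.ofReal (|(n : ℝ)| ^ t * c n)
      ≤ ∑' n : ℤ, ∫⁻ θ in Ioc 0 1,
          ENNReal.ofReal (θ ^ (-1 - t) * ((2 - 2 * cos (2 * π * n * θ)) * c n)) :=
        ENNReal.tsum_le_tsum fun n => ofReal_abs_intCast_rpow_mul_le_lintegral ht (hc n) n
    _ = ∫⁻ θ in Ioc 0 1, ∑' n : ℤ,
          ENNReal.ofReal (θ ^ (-1 - t) * ((2 - 2 * cos (2 * π * n * θ)) * c n)) :=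
        (lintegral_tsum fun n => by fun_prop).symm
    _ = ∫⁻ θ in Ioc 0 1, ENNReal.ofReal (θ ^ (-1 - t) * S θ) :=
        setLIntegral_congr_fun measurableSet_Ioc hweighted
    _ ≤ ∫⁻ θ in Ioc 0 1, ENNReal.ofReal (B * θ ^ (r - t - 1)) :=
        setLIntegral_mono' measurableSet_Ioc fun θ hθ =>
          ENNReal.ofReal_le_ofReal (hweighted_le θ hθ)
    _ = ENNReal.ofReal (B / (r - t)) := by
        simp_rw [ENNReal.ofReal_mul hB]
        rw [lintegral_const_mul' _ _ ENNReal.ofReal_ne_top,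
          lintegral_Ioc_zero_one_ofReal_rpow (by linarith), ← ENNReal.ofReal_mul hB]
        congr 1
        ring

theorem sobolev_from_holder_general
    {H : Type*} [NormedAddCommGroup H] [InnerProductSpace ℂ H]
    (f : ℤ → H) (F : H) (g : ℝ → H) (C s s' : ℝ)
    (hs' : s' ∈ Set.Ioo 0 s)
    (horth : ∀ m n : ℤ, m ≠ n → (inner ℂ (f m) (f n) : ℂ) = 0)
    (hF : HasSum f F)
    (hg : ∀ θ : ℝ, HasSum
      (fun n : ℤ => Complex.exp (2 * (Real.pi : ℂ) * Complex.I * (n : ℂ) * (θ : ℂ)) • f n)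
      (g θ))
    (hholder : ∀ θ ∈ Set.Ioc (0 : ℝ) 1, ‖g θ - F‖ ≤ C * θ ^ s) :
    ∑' n : ℤ, ENNReal.ofReal (|(n : ℝ)| ^ (2 * s') * ‖f n‖ ^ 2)
      ≤ ENNReal.ofReal (C ^ 2 / (2 * (s - s'))) := by
  obtain ⟨hs'0, hs's⟩ := hs'
  have hparseval (θ : ℝ) : HasSum (fun n : ℤ => (2 - 2 * cos (2 * π * n * θ)) * ‖f n‖ ^ 2)
      (‖g θ - F‖ ^ 2) := by
    refine HasSum.one_sub_cos_mul_norm_sq_of_pairwise_inner_eq_zero horth hF ?_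
    convert hg θ using 4
    push_cast
    ring_nf
  have hholder_sq : ∀ θ ∈ Ioc (0 : ℝ) 1, ‖g θ - F‖ ^ 2 ≤ C ^ 2 * θ ^ (2 * s) := fun θ hθ => by
    rw [mul_comm 2 s, rpow_mul hθ.1.le, rpow_two, ← mul_pow]
    exact pow_le_pow_left₀ (norm_nonneg _) (hholder θ hθ) 2
  have := tsum_ofReal_abs_rpow_mul_le_of_hasSum_one_sub_cos_mul (r := 2 * s) (t := 2 * s')
    (sq_nonneg C) (by positivity) (by linarith) (fun n => sq_nonneg ‖f n‖)
    (fun θ _ => hparseval θ) hholder_sq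
  rwa [← mul_sub] at this

/-- Sobolev regularity from a Hölder modulus of continuity (Appendix C): if
`f = ∑ₙ fₙ` is a sum of pairwise orthogonal vectors, `g θ = ∑ₙ e^{2πinθ} fₙ`, and
`‖g θ − f‖ ≤ C θˢ` for `θ ∈ (0,1]`, then `∑ₙ |n|^{2s′} ‖fₙ‖² ≤ C²/(2(s − s′))`
for every `s′ ∈ (0, s)`. -/
theorem sobolev_from_holder
    {H : Type*} [NormedAddCommGroup H] [InnerProductSpace ℂ H]
    (f : ℤ → H) (F : H) (g : ℝ → H) (C s s' : ℝ)
    (hC : 0 ≤ C) (hs : s ∈ Set.Ioc (0 : ℝ) 1) (hs' : s' ∈ Set.Ioo 0 s)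
    (horth : ∀ m n : ℤ, m ≠ n → (inner ℂ (f m) (f n) : ℂ) = 0)
    (hF : HasSum f F)
    (hg : ∀ θ : ℝ, HasSum
      (fun n : ℤ => Complex.exp (2 * (Real.pi : ℂ) * Complex.I * (n : ℂ) * (θ : ℂ)) • f n)
      (g θ))
    (hholder : ∀ θ ∈ Set.Ioc (0 : ℝ) 1, ‖g θ - F‖ ≤ C * θ ^ s) :
    ∑' n : ℤ, ENNReal.ofReal (|(n : ℝ)| ^ (2 * s') * ‖f n‖ ^ 2)
      ≤ ENNReal.ofReal (C ^ 2 / (2 * (s - s'))) :=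
  sobolev_from_holder_general f F g C s s' hs' horth hF hg hholder
end

section
/- For every nonzero integer n and every s′ ∈ (0, 1), one has ∫₀¹ |e^{2πinθ} − 1|² · θ^{−(1+2s′)} dθ ≥ |n|^{2s′}, where |·| denotes the complex absolute value and e^{2πinθ} = exp(2πinθ) is the complex exponential. -/
/-!
Since `‖e^{ix} - 1‖ = 2 |sin (x / 2)|`, Jordan's inequality gives `‖e^{iωθ} - 1‖ ≥ 2 |ω| θ / π`
for `0 < θ ≤ π / |ω|`, while `‖e^{iωθ} - 1‖ ≤ |ω| θ` makes the integrand integrable near `0`.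
Dropping the part of `(0, 1]` beyond `π / |ω|` and integrating the lower bound
`(2 |ω| / π)² θ^{1 - 2s}` gives `4 (|ω| / π)^{2s} / (2 - 2s)`, which for `ω = 2πn` and
`0 < s < 1` is at least `(2 |n|)^{2s} ≥ |n|^{2s}`.
-/

open MeasureTheory Real Set Complex

theorem Real.mul_abs_le_norm_exp_I_mul_ofReal_sub_one {x : ℝ} (hx : |x| ≤ π) :
    2 / π * |x| ≤ ‖Complex.exp (I * x) - 1‖ := by
  have hsin := Real.mul_abs_le_abs_sin (x := x / 2) (by rw [abs_div, abs_two]; linarith)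
  rw [Complex.norm_exp_I_mul_ofReal_sub_one, norm_mul, Real.norm_eq_abs, Real.norm_eq_abs,
    abs_two, abs_div, abs_two] at *
  linarith

lemma mul_sq_mul_rpow_neg_one_sub {θ : ℝ} (hθ : 0 < θ) (c s : ℝ) :
    (c * θ) ^ 2 * θ ^ (-(1 + 2 * s)) = c ^ 2 * θ ^ (1 - 2 * s) := by
  rw [mul_pow, mul_assoc, ← rpow_natCast θ 2, ← rpow_add hθ]
  congr 2
  push_cast
  ring

lemma intervalIntegrable_norm_exp_I_mul_sub_one_sq_mul_rpow (ω : ℝ) {s b : ℝ} (hs : s < 1)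
    (hb : 0 ≤ b) :
    IntervalIntegrable (fun θ : ℝ => ‖Complex.exp (I * ↑(ω * θ)) - 1‖ ^ 2 * θ ^ (-(1 + 2 * s)))
      volume 0 b := by
  have hmajorant : IntervalIntegrable (fun θ : ℝ => ω ^ 2 * θ ^ (1 - 2 * s)) volume 0 b :=
    (intervalIntegral.intervalIntegrable_rpow' (by linarith)).const_mul _
  refine hmajorant.mono_fun (by fun_prop) ?_
  rw [uIoc_of_le hb]
  filter_upwards [ae_restrict_mem measurableSet_Ioc] with θ hθ
  have hrpow : 0 ≤ θ ^ (-(1 + 2 * s)) := rpow_nonneg hθ.1.le _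
  have hrpow' : 0 ≤ θ ^ (1 - 2 * s) := rpow_nonneg hθ.1.le _
  rw [Real.norm_of_nonneg (by positivity), Real.norm_of_nonneg (by positivity), ← sq_abs ω,
    ← mul_sq_mul_rpow_neg_one_sub hθ.1]
  gcongr
  simpa [abs_of_pos hθ.1] using Real.norm_exp_I_mul_ofReal_sub_one_le (x := ω * θ)

theorem le_integral_norm_exp_I_mul_sub_one_sq_mul_rpow {ω s : ℝ} (hω : π ≤ |ω|) (hs : s < 1) :
    4 * (|ω| / π) ^ (2 * s) / (2 - 2 * s) ≤
      ∫ θ in (0 : ℝ)..1, ‖Complex.exp (I * ↑(ω * θ)) - 1‖ ^ 2 * θ ^ (-(1 + 2 * s)) := by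
  set u := |ω| / π
  have hu : 1 ≤ u := (one_le_div pi_pos).2 hω
  have hT : u⁻¹ ≤ 1 := inv_le_one_of_one_le₀ hu
  have hu0 : 0 < u := by linarith
  have hT0 : 0 < u⁻¹ := inv_pos.2 hu0
  have hpow : u ^ 2 * u⁻¹ ^ (1 - 2 * s + 1) = u ^ (2 * s) := by
    rw [inv_rpow hu0.le, ← rpow_neg hu0.le, ← rpow_natCast, ← rpow_add hu0]
    congr 1
    push_cast
    ring
  have hcomparison : ∀ θ ∈ Ioo 0 u⁻¹, (2 * u) ^ 2 * θ ^ (1 - 2 * s) ≤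
      ‖Complex.exp (I * ↑(ω * θ)) - 1‖ ^ 2 * θ ^ (-(1 + 2 * s)) := by
    rintro θ ⟨hθ, hθT⟩
    have hωθ : |ω * θ| ≤ π := by
      have h := mul_le_mul_of_nonneg_left hθT.le (abs_nonneg ω)
      rwa [inv_div, mul_div_cancel₀ _ (pi_pos.trans_le hω).ne', ← abs_of_pos hθ, ← abs_mul] at h
    rw [← mul_sq_mul_rpow_neg_one_sub hθ]
    gcongr
    calc 2 * u * θ = 2 / π * |ω * θ| := by
          rw [abs_mul, abs_of_pos hθ]; ring
      _ ≤ _ := Real.mul_abs_le_norm_exp_I_mul_ofReal_sub_one hωθ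
  calc 4 * u ^ (2 * s) / (2 - 2 * s)
      = (2 * u) ^ 2 * ((u⁻¹) ^ (1 - 2 * s + 1) / (1 - 2 * s + 1)) := by
        rw [← hpow]
        ring
    _ = ∫ θ in (0 : ℝ)..u⁻¹, (2 * u) ^ 2 * θ ^ (1 - 2 * s) := by
        rw [intervalIntegral.integral_const_mul, integral_rpow (Or.inl (by linarith)),
          zero_rpow (by linarith), sub_zero]
    _ ≤ ∫ θ in (0 : ℝ)..u⁻¹, ‖Complex.exp (I * ↑(ω * θ)) - 1‖ ^ 2 * θ ^ (-(1 + 2 * s)) :=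
        intervalIntegral.integral_mono_on_of_le_Ioo hT0.le
          ((intervalIntegral.intervalIntegrable_rpow' (by linarith)).const_mul _)
          (intervalIntegrable_norm_exp_I_mul_sub_one_sq_mul_rpow ω hs hT0.le) hcomparison
    _ ≤ _ := by
        refine intervalIntegral.integral_mono_interval le_rfl hT0.le hT ?_
          (intervalIntegrable_norm_exp_I_mul_sub_one_sq_mul_rpow ω hs zero_le_one)
        filter_upwards [ae_restrict_mem measurableSet_Ioc] with θ hθ
        exact mul_nonneg (sq_nonneg _) (rpow_nonneg hθ.1.le _)

/-- Key integral inequality of Appendix C: for `n ≠ 0` and `s′ ∈ (0,1)`,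
`∫₀¹ |e^{2πinθ} − 1|² θ^{−(1+2s′)} dθ ≥ |n|^{2s′}`. -/
theorem exp_circle_integral_lower_bound
    (n : ℤ) (hn : n ≠ 0) (s' : ℝ) (hs' : s' ∈ Set.Ioo (0 : ℝ) 1) :
    |(n : ℝ)| ^ (2 * s')
      ≤ ∫ θ in (0 : ℝ)..1,
          ‖Complex.exp (2 * (Real.pi : ℂ) * Complex.I * (n : ℂ) * (θ : ℂ)) - 1‖ ^ 2
            * θ ^ (-(1 + 2 * s')) := by
  obtain ⟨hs0, hs1⟩ := hs'
  have hn1 : (1 : ℝ) ≤ |(n : ℝ)| := by exact_mod_cast Int.one_le_abs hn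
  have hω : |2 * π * n| = π * (2 * |(n : ℝ)|) := by
    rw [abs_mul, abs_mul, abs_two, abs_of_pos pi_pos]; ring
  have hexp : ∀ θ : ℝ, 2 * (π : ℂ) * I * n * θ = I * ↑(2 * π * n * θ) := fun θ => by
    push_cast; ring
  simp_rw [hexp]
  calc |(n : ℝ)| ^ (2 * s') ≤ (2 * |(n : ℝ)|) ^ (2 * s') := by gcongr; linarith
    _ ≤ 4 * (2 * |(n : ℝ)|) ^ (2 * s') / (2 - 2 * s') := by
      rw [le_div_iff₀ (by linarith)]
      nlinarith [rpow_nonneg (by positivity : (0 : ℝ) ≤ 2 * |(n : ℝ)|) (2 * s')]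
    _ = 4 * (|2 * π * n| / π) ^ (2 * s') / (2 - 2 * s') := by
      rw [hω, mul_div_cancel_left₀ _ pi_ne_zero]
    _ ≤ _ := le_integral_norm_exp_I_mul_sub_one_sq_mul_rpow (by rw [hω]; nlinarith [pi_pos]) hs1
end

section
/- Let H be a complex Hilbert space with inner product ⟨·,·⟩ conjugate-linear in the first variable, let f ∈ H, let N ≥ 1 and let g₁, …, g_N ∈ H. Then there exist complex numbers c₁, …, c_N with ∑_{i=1}^N |c_i|² = 1 such that ∑_{i=1}^N |⟨f, g_i⟩|² ≤ ‖f‖² · ∑_{i=1}^N ∑_{j=1}^N c_i·conj(c_j)·⟨g_i, g_j⟩. (The double sum equals ‖∑_{j=1}^N conj(c_j)·g_j‖², so in particular it is a nonnegative real number.) -/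
/-!
Put `aᵢ = ⟪f, gᵢ⟫` and `v = ∑ⱼ conj cⱼ • gⱼ`, so that `⟪f, v⟫ = ∑ⱼ conj cⱼ · aⱼ` and the double
sum is `‖v‖²`. Choosing for `c` a unit vector in the direction of `a` makes `⟪f, v⟫ = ‖a‖`, and
Cauchy–Schwarz `|⟪f, v⟫| ≤ ‖f‖ ‖v‖` squares to `‖a‖² ≤ ‖f‖² ‖v‖²`.
-/

open scoped ComplexConjugate InnerProductSpace

section

variable {𝕜 E ι : Type*} [RCLike 𝕜] [NormedAddCommGroup E] [InnerProductSpace 𝕜 E]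

theorem exists_norm_eq_one_inner_eq_norm [Nontrivial E] (x : E) :
    ∃ u : E, ‖u‖ = 1 ∧ ⟪u, x⟫_𝕜 = ‖x‖ := by
  by_cases hx : x = 0
  · obtain ⟨y, hy⟩ := exists_ne (0 : E)
    exact ⟨(‖y‖ : 𝕜)⁻¹ • y, norm_smul_inv_norm hy, by simp [hx]⟩
  · refine ⟨(‖x‖ : 𝕜)⁻¹ • x, norm_smul_inv_norm hx, ?_⟩
    have hx' : (‖x‖ : 𝕜) ≠ 0 := by simpa using hx
    rw [inner_smul_left, inner_self_eq_norm_sq_to_K, map_inv₀, RCLike.conj_ofReal]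
    field_simp

variable [Fintype ι]

theorem exists_sum_norm_sq_eq_one_sum_conj_mul_eq [Nonempty ι] (a : ι → 𝕜) :
    ∃ c : ι → 𝕜, ∑ i, ‖c i‖ ^ 2 = 1 ∧ ∑ i, conj (c i) * a i = √(∑ i, ‖a i‖ ^ 2) := by
  obtain ⟨u, hu, hua⟩ := exists_norm_eq_one_inner_eq_norm (𝕜 := 𝕜) (WithLp.toLp 2 a)
  refine ⟨u.ofLp, by rw [← EuclideanSpace.norm_sq_eq, hu, one_pow], ?_⟩
  rw [← EuclideanSpace.norm_sq_eq, Real.sqrt_sq (norm_nonneg _), ← hua, PiLp.inner_apply]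
  simp only [RCLike.inner_apply, mul_comm]

theorem inner_sum_conj_smul (c : ι → 𝕜) (f : E) (g : ι → E) :
    ⟪f, ∑ j, conj (c j) • g j⟫_𝕜 = ∑ j, conj (c j) * ⟪f, g j⟫_𝕜 := by
  simp only [inner_sum, inner_smul_right]

theorem sum_sum_mul_conj_mul_inner_eq_norm_sq (c : ι → 𝕜) (g : ι → E) :
    ∑ i, ∑ j, c i * conj (c j) * ⟪g i, g j⟫_𝕜 = ((‖∑ j, conj (c j) • g j‖ ^ 2 : ℝ) : 𝕜) := by
  rw [RCLike.ofReal_pow, ← inner_self_eq_norm_sq_to_K, sum_inner]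
  refine Finset.sum_congr rfl fun i _ => ?_
  rw [inner_smul_left, RCLike.conj_conj, inner_sum_conj_smul, Finset.mul_sum]
  simp only [mul_assoc]

end

/-- The TT* (almost orthogonality) lemma (Appendix C, Lemma C.4), for a finite family:
there are coefficients `c` with `∑ |cᵢ|² = 1` such that
`∑ᵢ |⟨f, gᵢ⟩|² ≤ ‖f‖² ∑ᵢ∑ⱼ cᵢ · conj cⱼ · ⟨gᵢ, gⱼ⟩`; moreover the double sum equals
`‖∑ⱼ conj cⱼ • gⱼ‖²`, in particular it is a nonnegative real number. -/
theorem tt_star_lemma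
    {H : Type*} [NormedAddCommGroup H] [InnerProductSpace ℂ H]
    (f : H) (N : ℕ) (hN : 1 ≤ N) (g : Fin N → H) :
    ∃ c : Fin N → ℂ,
      (∑ i, ‖c i‖ ^ 2) = 1 ∧
      ((∑ i, ∑ j, c i * conj (c j) * (inner ℂ (g i) (g j) : ℂ))
          = ((‖∑ j, conj (c j) • g j‖ ^ 2 : ℝ) : ℂ)) ∧
      (∑ i, ‖(inner ℂ f (g i) : ℂ)‖ ^ 2)
        ≤ ‖f‖ ^ 2 * (∑ i, ∑ j, c i * conj (c j) * (inner ℂ (g i) (g j) : ℂ)).re := by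
  have : Nonempty (Fin N) := ⟨⟨0, hN⟩⟩
  obtain ⟨c, hc, hca⟩ := exists_sum_norm_sq_eq_one_sum_conj_mul_eq fun i => ⟪f, g i⟫_ℂ
  have hdouble : _ = ((‖∑ j, conj (c j) • g j‖ ^ 2 : ℝ) : ℂ) :=
    sum_sum_mul_conj_mul_inner_eq_norm_sq c g
  refine ⟨c, hc, hdouble, ?_⟩
  have hcs := norm_inner_le_norm (𝕜 := ℂ) f (∑ j, conj (c j) • g j)
  rw [inner_sum_conj_smul, hca, RCLike.norm_ofReal,
    abs_of_nonneg (Real.sqrt_nonneg _)] at hcs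
  calc ∑ i, ‖⟪f, g i⟫_ℂ‖ ^ 2 = √(∑ i, ‖⟪f, g i⟫_ℂ‖ ^ 2) ^ 2 :=
        (Real.sq_sqrt (Finset.sum_nonneg fun i _ => sq_nonneg _)).symm
    _ ≤ (‖f‖ * ‖∑ j, conj (c j) • g j‖) ^ 2 := pow_le_pow_left₀ (Real.sqrt_nonneg _) hcs 2
    _ = ‖f‖ ^ 2 * (∑ i, ∑ j, c i * conj (c j) * ⟪g i, g j⟫_ℂ).re := by
        rw [hdouble, Complex.ofReal_re, mul_pow]
end
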